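/- arXiv:1406.7573 — 4 statements merged into one kernel-verified Lean document; each statement's English description precedes it below -/
import Mathlib

section
/- The L² bound ‖[f,g;h]‖_{L²} ≤ C‖f'‖_{L²}‖g'‖_{L²}‖h‖_{L²} holds with a universal constant C, where [f,g;h](α') = (π/4i) ∫_{-1}^{1} [(f(α')-f(β'))/sin(π/2(α'-β'))] [(g(α')-g(β'))/sin(π/2(α'-β'))] h(β') dβ'. -/
open MeasureTheory Set ENNReal

theorem ofReal_norm_eq_coe_nnnorm {E : Type*} [SeminormedAddGroup E] (a : E) :
    ENNReal.ofReal ‖a‖ = ((‖a‖₊ : NNReal) : ℝ≥0∞) :=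
  ENNReal.ofReal_eq_coe_nnreal _

/-- Cauchy–Schwarz for lintegrals. -/
lemma lintegral_mul_sq {α : Type*} [MeasurableSpace α] (μ : Measure α) {f g : α → ℝ≥0∞}
    (hf : AEMeasurable f μ) (hg : AEMeasurable g μ) :
    (∫⁻ x, f x * g x ∂μ) ^ 2 ≤ (∫⁻ x, f x ^ 2 ∂μ) * ∫⁻ x, g x ^ 2 ∂μ := by
  have hpq : (2:ℝ).HolderConjugate 2 := Real.HolderConjugate.two_two
  have h := ENNReal.lintegral_mul_le_Lp_mul_Lq μ hpq hf hg
  have h2 : ∀ x : ℝ≥0∞, x ^ (2:ℝ) = x ^ 2 := fun x => by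
    rw [show (2:ℝ) = ((2:ℕ):ℝ) by norm_num, ENNReal.rpow_natCast]
  simp only [h2] at h
  calc (∫⁻ x, f x * g x ∂μ) ^ 2
      ≤ ((∫⁻ x, f x ^ 2 ∂μ) ^ (1/(2:ℝ)) * (∫⁻ x, g x ^ 2 ∂μ) ^ (1/(2:ℝ))) ^ 2 := by
        exact pow_le_pow_left' h 2
    _ = (∫⁻ x, f x ^ 2 ∂μ) * ∫⁻ x, g x ^ 2 ∂μ := by
        rw [← h2, ENNReal.mul_rpow_of_nonneg _ _ (by norm_num : (0:ℝ) ≤ 2),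
          ← ENNReal.rpow_mul, ← ENNReal.rpow_mul]
        norm_num

lemma sq_lintegral_le {α : Type*} [MeasurableSpace α] (μ : Measure α) {f : α → ℝ≥0∞}
    (hf : AEMeasurable f μ) :
    (∫⁻ x, f x ∂μ) ^ 2 ≤ (∫⁻ x, f x ^ 2 ∂μ) * μ univ := by
  have := lintegral_mul_sq μ hf (aemeasurable_const (b := (1:ℝ≥0∞)))
  simpa using this

/-- `|t| ≤ |sin (π/2 * t)|` for `|t| ≤ 1`. -/
lemma abs_le_abs_sin {t : ℝ} (ht : |t| ≤ 1) : |t| ≤ |Real.sin (Real.pi/2 * t)| := by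
  rcases le_or_gt 0 t with h | h
  · rw [abs_of_nonneg h] at ht ⊢
    have := Real.le_sin_mul h ht
    calc t ≤ Real.sin (Real.pi/2 * t) := this
      _ ≤ |Real.sin (Real.pi/2 * t)| := le_abs_self _
  · have ht' : |(-t)| ≤ 1 := by rwa [abs_neg]
    rw [abs_of_nonpos h.le] at ht ⊢
    have := Real.le_sin_mul (x := -t) (by linarith) (by linarith)
    calc -t ≤ Real.sin (Real.pi/2 * -t) := this
      _ = -Real.sin (Real.pi/2 * t) := by rw [mul_neg, Real.sin_neg]
      _ ≤ |Real.sin (Real.pi/2 * t)| := by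
          rw [← abs_neg]; exact le_abs_self _

/-- `2 - |t| ≤ |sin (π/2 * t)|` for `1 ≤ |t| ≤ 2`. -/
lemma two_sub_abs_le_abs_sin {t : ℝ} (h1 : 1 ≤ |t|) (h2 : |t| ≤ 2) :
    2 - |t| ≤ |Real.sin (Real.pi/2 * t)| := by
  rcases le_or_gt 0 t with h | h
  · rw [abs_of_nonneg h] at h1 h2 ⊢
    have key : Real.sin (Real.pi/2 * t) = Real.sin (Real.pi/2 * (2 - t)) := by
      rw [show Real.pi/2 * (2 - t) = Real.pi - Real.pi/2 * t by ring, Real.sin_pi_sub]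
    have := abs_le_abs_sin (t := 2 - t) (by rw [abs_of_nonneg (by linarith)]; linarith)
    rw [abs_of_nonneg (by linarith)] at this
    rw [key]; exact this
  · rw [abs_of_nonpos h.le] at h1 h2 ⊢
    have key : |Real.sin (Real.pi/2 * t)| = |Real.sin (Real.pi/2 * (-t))| := by
      rw [mul_neg, Real.sin_neg, abs_neg]
    rw [key]
    have : Real.sin (Real.pi/2 * (-t)) = Real.sin (Real.pi/2 * (2 - (-t))) := by
      rw [show Real.pi/2 * (2 - (-t)) = Real.pi - Real.pi/2 * (-t) by ring, Real.sin_pi_sub]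
    have h3 := abs_le_abs_sin (t := 2 - (-t)) (by rw [abs_of_nonneg (by linarith)]; linarith)
    rw [abs_of_nonneg (by linarith)] at h3
    rw [this]; linarith [le_abs_self (Real.sin (Real.pi/2 * (2 - -t)))]



/-- Convert a set lintegral of `ofReal` to `ofReal` of a Bochner integral. -/
lemma lint_eq_ofReal {a b : ℝ} {F : ℝ → ℝ} (hi : IntegrableOn F (Ioc a b))
    (hnn : ∀ x ∈ Ioc a b, 0 ≤ F x) :
    ∫⁻ x in Ioc a b, ENNReal.ofReal (F x) = ENNReal.ofReal (∫ x in Ioc a b, F x) :=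
  (ofReal_integral_eq_lintegral_ofReal hi
    ((ae_restrict_mem measurableSet_Ioc).mono hnn)).symm

/-- integrability of shifted rpow -/
lemma integrableOn_rpow_shift {r : ℝ} (hr : -1 < r) (a t : ℝ) :
    IntegrableOn (fun s => (s - a) ^ r) (Ioc a t) := by
  rcases le_or_gt t a with h | h
  · rw [Ioc_eq_empty (by exact not_lt.mpr h)]; exact integrableOn_empty
  · have := (intervalIntegral.intervalIntegrable_rpow' (a := 0) (b := t - a) hr).comp_sub_right a
    rw [intervalIntegrable_iff_integrableOn_Ioc_of_le (by linarith : (0:ℝ) + a ≤ t - a + a)] at this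
    simpa using this

lemma integral_rpow_shift {r : ℝ} (hr : -1 < r) {a t : ℝ} (h : a ≤ t) :
    ∫ s in Ioc a t, (s - a) ^ r = (t - a) ^ (r + 1) / (r + 1) := by
  rw [← intervalIntegral.integral_of_le h]
  rw [intervalIntegral.integral_comp_sub_right (fun s => s ^ r) a]
  rw [integral_rpow (Or.inl hr)]
  rw [sub_self, Real.zero_rpow (by linarith)]
  ring

/-- `∫⁻ s in Ioc a t, (s-a)^(-1/2) = 2 (t-a)^(1/2)` -/
lemma lint_inv_sqrt {a t : ℝ} (h : a ≤ t) :
    ∫⁻ s in Ioc a t, ENNReal.ofReal ((s - a) ^ (-(1:ℝ)/2)) =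
      ENNReal.ofReal (2 * (t - a) ^ ((1:ℝ)/2)) := by
  rw [lint_eq_ofReal (integrableOn_rpow_shift (by norm_num) a t)
    (fun x hx => Real.rpow_nonneg (by simp at hx; linarith [hx.1]) _)]
  rw [integral_rpow_shift (by norm_num) h]
  norm_num [div_eq_mul_inv, mul_comm]

/-- tail integral of `(t-a)^(-3/2)` from `s`. -/
lemma lint_tail_pow {a s b : ℝ} (hs : a < s) :
    ∫⁻ t in Ioc s b, ENNReal.ofReal (2 * (t - a) ^ (-(3:ℝ)/2)) ≤
      ENNReal.ofReal (4 * (s - a) ^ (-(1:ℝ)/2)) := by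
  rcases le_or_gt b s with h | h
  · rw [Ioc_eq_empty (by exact not_lt.mpr h)]; simp
  · have hi : IntegrableOn (fun t => 2 * (t - a) ^ (-(3:ℝ)/2)) (Ioc s b) := by
      have : IntervalIntegrable (fun x : ℝ => x ^ (-(3:ℝ)/2)) volume (s - a) (b - a) := by
        apply intervalIntegral.intervalIntegrable_rpow
        right; rw [uIcc_of_le (by linarith)]; intro hmem
        simp at hmem; linarith [hmem.1]
      have := (this.comp_sub_right a).const_mul 2
      rw [intervalIntegrable_iff_integrableOn_Ioc_of_le (by linarith : s - a + a ≤ b - a + a)]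
        at this
      simpa using this
    rw [lint_eq_ofReal hi (fun x hx => by
      have hxa : (0:ℝ) < x - a := by simp only [mem_Ioc] at hx; linarith [hx.1]
      positivity)]
    apply ENNReal.ofReal_le_ofReal
    rw [← intervalIntegral.integral_of_le h.le]
    have : (∫ t in s..b, 2 * (t - a) ^ (-(3:ℝ)/2)) =
        2 * ∫ x in (s-a)..(b-a), x ^ (-(3:ℝ)/2) := by
      rw [← intervalIntegral.integral_const_mul]
      rw [show s - a = s - a by rfl]
      rw [← intervalIntegral.integral_comp_sub_right (fun x => 2 * x ^ (-(3:ℝ)/2)) a]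
    rw [this, integral_rpow (Or.inr ⟨by norm_num, by
      rw [uIcc_of_le (by linarith)]; intro hmem; simp at hmem; linarith [hmem.1]⟩)]
    have h1 : (0:ℝ) < s - a := by linarith
    have h2 : (0:ℝ) < b - a := by linarith
    have e1 : (0:ℝ) ≤ (b - a) ^ (-(3:ℝ)/2 + 1) := Real.rpow_nonneg h2.le _
    have : -(3:ℝ)/2 + 1 = -(1/2) := by norm_num
    rw [this]
    have hb : (b-a) ^ (-(1:ℝ)/2) ≥ 0 := Real.rpow_nonneg h2.le _
    have : ((b - a) ^ (-((1:ℝ)/2)) - (s - a) ^ (-((1:ℝ)/2))) / (-(1/2)) =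
        2 * ((s-a) ^ (-((1:ℝ)/2)) - (b - a) ^ (-((1:ℝ)/2))) := by ring
    rw [this]
    have : (0:ℝ) ≤ (b - a) ^ (-((1:ℝ)/2)) := Real.rpow_nonneg h2.le _
    nlinarith [Real.rpow_nonneg h1.le (-(1:ℝ)/2)]

/-- `∫⁻ x in Ioc a b, (ofReal (c + (x - a)))⁻²  ≤ ofReal c⁻¹` for `c > 0`. -/
lemma lint_inv_sq {c : ℝ} (hc : 0 < c) (a b : ℝ) :
    ∫⁻ x in Ioc a b, ((ENNReal.ofReal (c + (x - a))) ^ 2)⁻¹ ≤ ENNReal.ofReal c⁻¹ := by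
  rcases le_or_gt b a with h | h
  · rw [Ioc_eq_empty (by exact not_lt.mpr h)]; simp
  · have key : ∀ x ∈ Ioc a b, ((ENNReal.ofReal (c + (x - a))) ^ 2)⁻¹ =
        ENNReal.ofReal ((x - (a - c)) ^ (-2:ℝ)) := by
      intro x hx
      simp only [mem_Ioc] at hx
      have hpos : 0 < c + (x - a) := by linarith [hx.1]
      rw [show c + (x - a) = x - (a - c) by ring] at hpos ⊢
      rw [← ENNReal.ofReal_pow hpos.le, ← ENNReal.ofReal_inv_of_pos (by positivity),
        Real.rpow_neg hpos.le, Real.rpow_two]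
    rw [setLIntegral_congr_fun measurableSet_Ioc key]
    have hi : IntegrableOn (fun x => (x - (a - c)) ^ (-2:ℝ)) (Ioc a b) := by
      have : IntervalIntegrable (fun x : ℝ => x ^ (-2:ℝ)) volume c (c + (b - a)) := by
        apply intervalIntegral.intervalIntegrable_rpow
        right; rw [uIcc_of_le (by linarith)]; intro hmem; simp at hmem; linarith [hmem.1]
      have h2 := this.comp_sub_right (a - c)
      rw [intervalIntegrable_iff_integrableOn_Ioc_of_le
        (by linarith : c + (a - c) ≤ c + (b - a) + (a - c))] at h2
      rw [show c + (a - c) = a by ring, show c + (b - a) + (a - c) = b by ring] at h2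
      exact h2
    rw [lint_eq_ofReal hi (fun x hx => by
      simp only [mem_Ioc] at hx
      exact Real.rpow_nonneg (by linarith [hx.1]) _)]
    apply ENNReal.ofReal_le_ofReal
    rw [← intervalIntegral.integral_of_le h.le]
    rw [intervalIntegral.integral_comp_sub_right (fun y => y ^ (-2:ℝ)) (a - c)]
    rw [show a - (a - c) = c by ring, show b - (a - c) = c + (b - a) by ring]
    rw [integral_rpow (Or.inr ⟨by norm_num, by
      rw [uIcc_of_le (by linarith)]; intro hmem; simp at hmem; linarith [hmem.1]⟩)]
    have h1 : (0:ℝ) < c + (b - a) := by linarith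
    rw [show (-2:ℝ) + 1 = -1 by norm_num, Real.rpow_neg_one, Real.rpow_neg_one]
    have : (0:ℝ) ≤ (c + (b - a))⁻¹ := by positivity
    have he : ((c + (b - a))⁻¹ - c⁻¹) / (-1) = c⁻¹ - (c + (b-a))⁻¹ := by ring
    rw [he]
    linarith




lemma measurable_ofReal_rpow (a : ℝ) {r : ℝ} (hr : 0 ≤ r) :
    Measurable (fun s : ℝ => ENNReal.ofReal ((s - a) ^ r)) :=
  ENNReal.measurable_ofReal.comp
    ((Real.continuous_rpow_const hr).comp (continuous_id.sub continuous_const)).measurable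

/-- Forward Hardy inequality. -/
lemma hardy_fwd (ψ : ℝ → ℝ≥0∞) (hψ : Measurable ψ) (a b : ℝ) :
    ∫⁻ t in Ioc a b, ((∫⁻ s in Ioc a t, ψ s) / ENNReal.ofReal (t - a)) ^ 2
      ≤ 4 * ∫⁻ s in Ioc a b, ψ s ^ 2 := by
  set u : ℝ → ℝ≥0∞ := fun s => ENNReal.ofReal ((s - a) ^ ((1:ℝ)/4)) with hu
  set w : ℝ → ℝ≥0∞ := fun s => ENNReal.ofReal ((s - a) ^ ((1:ℝ)/2)) with hw
  have humeas : Measurable u := measurable_ofReal_rpow a (by norm_num)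
  have hwmeas : Measurable w := measurable_ofReal_rpow a (by norm_num)
  set c : ℝ → ℝ≥0∞ := fun t => 2 * (ENNReal.ofReal ((t - a) ^ ((3:ℝ)/2)))⁻¹ with hc
  have hcmeas : Measurable c := (measurable_ofReal_rpow a (by norm_num)).inv.const_mul 2
  have hc_eq : ∀ t, a < t → ENNReal.ofReal (2 * (t - a) ^ (-(3:ℝ)/2)) = c t := by
    intro t ht
    have h0 : (0:ℝ) < t - a := by linarith
    have hre : (t - a) ^ (-(3:ℝ)/2) = ((t - a) ^ ((3:ℝ)/2))⁻¹ := by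
      rw [← Real.rpow_neg_one ((t - a) ^ ((3:ℝ)/2)), ← Real.rpow_mul h0.le]
      norm_num
    rw [hc, hre, ENNReal.ofReal_mul (by norm_num),
      ENNReal.ofReal_inv_of_pos (Real.rpow_pos_of_pos h0 _), ENNReal.ofReal_ofNat]
  have hc_ne_top : ∀ t, a < t → c t ≠ ⊤ := by
    intro t ht
    rw [hc]
    exact ENNReal.mul_ne_top (by simp) (by
      simp [ENNReal.inv_ne_top, ENNReal.ofReal_pos,
        Real.rpow_pos_of_pos (by linarith : (0:ℝ) < t - a)])
  -- Step A : pointwise Cauchy-Schwarz bound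
  have stepA : ∀ t ∈ Ioc a b, ((∫⁻ s in Ioc a t, ψ s) / ENNReal.ofReal (t - a)) ^ 2
      ≤ (∫⁻ s in Ioc a t, ψ s ^ 2 * w s) * c t := by
    intro t ht
    simp only [mem_Ioc] at ht
    have h0t : (0:ℝ) < t - a := by linarith [ht.1]
    have hCS : (∫⁻ s in Ioc a t, ψ s) ^ 2
        ≤ (∫⁻ s in Ioc a t, ψ s ^ 2 * w s) * ENNReal.ofReal (2 * (t - a) ^ ((1:ℝ)/2)) := by
      have hre : ∫⁻ s in Ioc a t, ψ s = ∫⁻ s in Ioc a t, (ψ s * u s) * (u s)⁻¹ := by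
        apply setLIntegral_congr_fun measurableSet_Ioc
        intro s hs
        simp only [mem_Ioc] at hs
        have h1 : (0:ℝ) < (s - a) ^ ((1:ℝ)/4) := Real.rpow_pos_of_pos (by linarith [hs.1]) _
        dsimp only
        rw [mul_assoc, ENNReal.mul_inv_cancel ((ENNReal.ofReal_pos.mpr h1).ne')
          ENNReal.ofReal_ne_top, mul_one]
      rw [hre]
      refine le_trans (lintegral_mul_sq (volume.restrict (Ioc a t))
        (f := fun s => ψ s * u s) (g := fun s => (u s)⁻¹)
        (hψ.mul humeas).aemeasurable humeas.inv.aemeasurable) ?_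
      have e1 : ∫⁻ s in Ioc a t, (ψ s * u s) ^ 2 = ∫⁻ s in Ioc a t, ψ s ^ 2 * w s := by
        apply setLIntegral_congr_fun measurableSet_Ioc
        intro s hs
        simp only [mem_Ioc] at hs
        have h0 : (0:ℝ) ≤ s - a := by linarith [hs.1]
        dsimp only
        rw [mul_pow]
        congr 1
        rw [hu, hw]
        simp only [← ENNReal.ofReal_pow (Real.rpow_nonneg h0 _)]
        congr 1
        rw [← Real.rpow_natCast ((s-a) ^ ((1:ℝ)/4)) 2, ← Real.rpow_mul h0]
        norm_num
      have e2 : ∫⁻ s in Ioc a t, ((u s)⁻¹) ^ 2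
          = ∫⁻ s in Ioc a t, ENNReal.ofReal ((s - a) ^ (-(1:ℝ)/2)) := by
        apply setLIntegral_congr_fun measurableSet_Ioc
        intro s hs
        simp only [mem_Ioc] at hs
        have h0 : (0:ℝ) < s - a := by linarith [hs.1]
        have k1 : (s - a) ^ (-(1:ℝ)/2) = (((s - a) ^ ((1:ℝ)/4)) ^ (2:ℕ))⁻¹ := by
          rw [← Real.rpow_natCast ((s-a) ^ ((1:ℝ)/4)) 2, ← Real.rpow_mul h0.le,
            ← Real.rpow_neg h0.le]
          norm_num
        dsimp only
        rw [k1, ENNReal.ofReal_inv_of_pos (by positivity),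
          ENNReal.ofReal_pow (Real.rpow_nonneg h0.le _), ← ENNReal.inv_pow, hu]
      rw [e1, e2, lint_inv_sqrt (by linarith [ht.1] : a ≤ t)]
    calc ((∫⁻ s in Ioc a t, ψ s) / ENNReal.ofReal (t - a)) ^ 2
        = (∫⁻ s in Ioc a t, ψ s) ^ 2 * ((ENNReal.ofReal (t - a)) ^ 2)⁻¹ := by
          rw [div_eq_mul_inv, mul_pow, ENNReal.inv_pow]
      _ ≤ ((∫⁻ s in Ioc a t, ψ s ^ 2 * w s) * ENNReal.ofReal (2 * (t - a) ^ ((1:ℝ)/2)))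
            * ((ENNReal.ofReal (t - a)) ^ 2)⁻¹ := by
          exact mul_le_mul_left hCS _
      _ = (∫⁻ s in Ioc a t, ψ s ^ 2 * w s) *
            (ENNReal.ofReal (2 * (t - a) ^ ((1:ℝ)/2)) * ((ENNReal.ofReal (t - a)) ^ 2)⁻¹) := by
          rw [mul_assoc]
      _ = (∫⁻ s in Ioc a t, ψ s ^ 2 * w s) * c t := by
          congr 1
          rw [← hc_eq t (by linarith [ht.1])]
          rw [← ENNReal.ofReal_pow h0t.le, ← ENNReal.ofReal_inv_of_pos (by positivity)]
          rw [← ENNReal.ofReal_mul (by positivity)]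
          congr 1
          rw [← Real.rpow_natCast (t-a) 2, ← Real.rpow_neg h0t.le, mul_assoc,
            ← Real.rpow_add h0t]
          norm_num
  -- Step B: integrate and swap
  have hFmeas : Measurable (fun s => ψ s ^ 2 * w s) := (hψ.pow_const 2).mul hwmeas
  calc ∫⁻ t in Ioc a b, ((∫⁻ s in Ioc a t, ψ s) / ENNReal.ofReal (t - a)) ^ 2
      ≤ ∫⁻ t in Ioc a b, (∫⁻ s in Ioc a t, ψ s ^ 2 * w s) * c t := by
        apply lintegral_mono_ae
        filter_upwards [ae_restrict_mem measurableSet_Ioc] with t ht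
        exact stepA t ht
    _ = ∫⁻ t in Ioc a b, ∫⁻ s in Ioc a b,
          ((if s ≤ t then ψ s ^ 2 * w s else 0) * c t) := by
        apply setLIntegral_congr_fun measurableSet_Ioc
        intro t ht
        simp only [mem_Ioc] at ht
        dsimp only
        rw [lintegral_mul_const' (c t) _ (hc_ne_top t ht.1)]
        congr 1
        have : ∀ s : ℝ, (if s ≤ t then ψ s ^ 2 * w s else 0)
            = (Iic t).indicator (fun s => ψ s ^ 2 * w s) s := by
          intro s; simp [Set.indicator_apply, mem_Iic]
        simp only [this]
        rw [lintegral_indicator measurableSet_Iic, Measure.restrict_restrict measurableSet_Iic]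
        have hset : Iic t ∩ Ioc a b = Ioc a t := by
          ext s
          simp only [mem_inter_iff, mem_Iic, mem_Ioc]
          constructor
          · rintro ⟨h1, h2, h3⟩; exact ⟨h2, h1⟩
          · rintro ⟨h1, h2⟩; exact ⟨h2, h1, h2.trans ht.2⟩
        rw [hset]
    _ = ∫⁻ s in Ioc a b, ∫⁻ t in Ioc a b,
          ((if s ≤ t then ψ s ^ 2 * w s else 0) * c t) := by
        apply lintegral_lintegral_swap
        apply Measurable.aemeasurable
        apply Measurable.mul
        · apply Measurable.ite (measurableSet_le measurable_snd measurable_fst)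
          · exact hFmeas.comp measurable_snd
          · exact measurable_const
        · exact hcmeas.comp measurable_fst
    _ ≤ ∫⁻ s in Ioc a b, 4 * ψ s ^ 2 := by
        apply lintegral_mono_ae
        filter_upwards [ae_restrict_mem measurableSet_Ioc] with s hs
        simp only [mem_Ioc] at hs
        have e3 : ∀ t : ℝ, (if s ≤ t then ψ s ^ 2 * w s else 0) * c t
            = (ψ s ^ 2 * w s) * (Ici s).indicator c t := by
          intro t
          by_cases h : s ≤ t <;> simp [Set.indicator_apply, mem_Ici, h]
        simp only [e3]
        rw [lintegral_const_mul _ (hcmeas.indicator measurableSet_Ici)]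
        have e4 : ∫⁻ t in Ioc a b, (Ici s).indicator c t ≤ ENNReal.ofReal (4 * (s - a) ^ (-(1:ℝ)/2)) := by
          rw [lintegral_indicator measurableSet_Ici, Measure.restrict_restrict measurableSet_Ici]
          have hsub : Ici s ∩ Ioc a b ⊆ Icc s b := by
            rintro x ⟨h1, h2, h3⟩; exact ⟨h1, h3⟩
          refine le_trans (lintegral_mono_set hsub) ?_
          rw [Measure.restrict_congr_set Ioc_ae_eq_Icc.symm]
          calc ∫⁻ t in Ioc s b, c t
              = ∫⁻ t in Ioc s b, ENNReal.ofReal (2 * (t - a) ^ (-(3:ℝ)/2)) := by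
                apply setLIntegral_congr_fun measurableSet_Ioc
                intro t ht
                simp only [mem_Ioc] at ht
                exact (hc_eq t (by linarith [hs.1, ht.1])).symm
            _ ≤ ENNReal.ofReal (4 * (s - a) ^ (-(1:ℝ)/2)) := lint_tail_pow hs.1
        have hws : w s * ENNReal.ofReal (4 * (s - a) ^ (-(1:ℝ)/2)) = 4 := by
          have h0 : (0:ℝ) < s - a := by linarith [hs.1]
          rw [hw]
          rw [← ENNReal.ofReal_mul (Real.rpow_nonneg h0.le _)]
          have : (s - a) ^ ((1:ℝ)/2) * (4 * (s - a) ^ (-(1:ℝ)/2)) = 4 := by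
            rw [mul_comm (4:ℝ) _, ← mul_assoc, ← Real.rpow_add h0]
            norm_num
          rw [this]
          simp [ENNReal.ofReal_ofNat]
        calc ψ s ^ 2 * w s * ∫⁻ t in Ioc a b, (Ici s).indicator c t
            ≤ ψ s ^ 2 * w s * ENNReal.ofReal (4 * (s - a) ^ (-(1:ℝ)/2)) :=
              mul_le_mul_right e4 _
          _ = 4 * ψ s ^ 2 := by rw [mul_assoc, hws, mul_comm]
    _ = 4 * ∫⁻ s in Ioc a b, ψ s ^ 2 := lintegral_const_mul 4 (hψ.pow_const 2)

/-- Backward Hardy inequality, by reflection. -/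
lemma hardy_bwd (ψ : ℝ → ℝ≥0∞) (hψ : Measurable ψ) (a b : ℝ) :
    ∫⁻ t in Ico a b, ((∫⁻ s in Ioc t b, ψ s) / ENNReal.ofReal (b - t)) ^ 2
      ≤ 4 * ∫⁻ s in Ioc a b, ψ s ^ 2 := by
  have hemb : MeasurableEmbedding (Neg.neg : ℝ → ℝ) := measurableEmbedding_neg
  have hmp := Measure.measurePreserving_neg (volume : Measure ℝ)
  set ψ' : ℝ → ℝ≥0∞ := fun s => ψ (-s) with hψ'
  have hψ'm : Measurable ψ' := hψ.comp measurable_neg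
  have inner : ∀ t : ℝ, ∫⁻ s in Ioc (-b) (-t), ψ' s = ∫⁻ s in Ioc t b, ψ s := by
    intro t
    rw [hmp.setLIntegral_comp_emb hemb ψ (Ioc (-b) (-t))]
    have himg : (Neg.neg : ℝ → ℝ) '' Ioc (-b) (-t) = Ico t b := by
      rw [Set.image_neg_eq_neg, Set.neg_Ioc]; simp
    rw [himg, Measure.restrict_congr_set Ico_ae_eq_Ioc]
  have himg : (Neg.neg : ℝ → ℝ) '' Ioc (-b) (-a) = Ico a b := by
    rw [Set.image_neg_eq_neg, Set.neg_Ioc]; simp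
  have trans : ∫⁻ x in Ioc (-b) (-a),
        ((∫⁻ s in Ioc (-x) b, ψ s) / ENNReal.ofReal (b - -x)) ^ 2
      = ∫⁻ t in Ico a b, ((∫⁻ s in Ioc t b, ψ s) / ENNReal.ofReal (b - t)) ^ 2 := by
    have h2 := hmp.setLIntegral_comp_emb hemb
      (fun t => ((∫⁻ s in Ioc t b, ψ s) / ENNReal.ofReal (b - t)) ^ 2) (Ioc (-b) (-a))
    rw [himg] at h2
    exact h2
  have outer : ∫⁻ t in Ico a b, ((∫⁻ s in Ioc t b, ψ s) / ENNReal.ofReal (b - t)) ^ 2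
      = ∫⁻ x in Ioc (-b) (-a), ((∫⁻ s in Ioc (-b) x, ψ' s) / ENNReal.ofReal (x - (-b))) ^ 2 := by
    rw [← trans]
    apply setLIntegral_congr_fun measurableSet_Ioc
    intro x _
    dsimp only
    rw [← inner (-x), neg_neg]
    congr 2
    ring
  rw [outer]
  refine le_trans (hardy_fwd ψ' hψ'm (-b) (-a)) ?_
  rw [hmp.setLIntegral_comp_emb hemb (fun s => ψ s ^ 2) (Ioc (-b) (-a))]
  have himg : (Neg.neg : ℝ → ℝ) '' Ioc (-b) (-a) = Ico a b := by
    rw [Set.image_neg_eq_neg, Set.neg_Ioc]; simp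
  rw [himg, Measure.restrict_congr_set Ico_ae_eq_Ioc]




/-- mirrored inverse-square integral bound -/
lemma lint_inv_sq' {c : ℝ} (hc : 0 < c) (a b : ℝ) :
    ∫⁻ x in Ioc a b, ((ENNReal.ofReal (c + (b - x))) ^ 2)⁻¹ ≤ ENNReal.ofReal c⁻¹ := by
  have hemb : MeasurableEmbedding (Neg.neg : ℝ → ℝ) := measurableEmbedding_neg
  have hmp := Measure.measurePreserving_neg (volume : Measure ℝ)
  have himg : (Neg.neg : ℝ → ℝ) '' Ioc (-b) (-a) = Ico a b := by
    rw [Set.image_neg_eq_neg, Set.neg_Ioc]; simp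
  have h2 := hmp.setLIntegral_comp_emb hemb
    (fun x => ((ENNReal.ofReal (c + (b - x))) ^ 2)⁻¹) (Ioc (-b) (-a))
  rw [himg] at h2
  calc ∫⁻ x in Ioc a b, ((ENNReal.ofReal (c + (b - x))) ^ 2)⁻¹
      = ∫⁻ x in Ico a b, ((ENNReal.ofReal (c + (b - x))) ^ 2)⁻¹ := by
        rw [Measure.restrict_congr_set Ico_ae_eq_Ioc]
    _ = ∫⁻ y in Ioc (-b) (-a), ((ENNReal.ofReal (c + (b - -y))) ^ 2)⁻¹ := h2.symm
    _ = ∫⁻ y in Ioc (-b) (-a), ((ENNReal.ofReal (c + (y - -b))) ^ 2)⁻¹ := by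
        apply setLIntegral_congr_fun measurableSet_Ioc
        intro y _
        dsimp only
        congr 3
        ring
    _ ≤ ENNReal.ofReal c⁻¹ := lint_inv_sq hc (-b) (-a)

lemma add_sq_le_four (x y : ℝ≥0∞) : (x + y) ^ 2 ≤ 4 * x ^ 2 + 4 * y ^ 2 := by
  rcases le_total x y with h | h
  · calc (x + y)^2 ≤ (y + y)^2 := by gcongr
      _ = 4 * y^2 := by ring
      _ ≤ 4 * x^2 + 4 * y^2 := le_add_self
  · calc (x + y)^2 ≤ (x + x)^2 := by gcongr
      _ = 4 * x^2 := by ring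
      _ ≤ 4 * x^2 + 4 * y^2 := le_self_add

/-- The kernel-dominating function. -/
noncomputable def Phi (φ : ℝ → ℝ≥0∞) (α β : ℝ) : ℝ≥0∞ :=
  if |α - β| ≤ 1 then
    ((∫⁻ s in Ioc (-1:ℝ) (max α β), φ s) - ∫⁻ s in Ioc (-1:ℝ) (min α β), φ s)
      / ENNReal.ofReal |α - β|
  else
    ((∫⁻ s in Ioc (-1:ℝ) 1, φ s) - (∫⁻ s in Ioc (-1:ℝ) (max α β), φ s)
       + ∫⁻ s in Ioc (-1:ℝ) (min α β), φ s) / ENNReal.ofReal (2 - |α - β|)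

lemma Phi_symm (φ : ℝ → ℝ≥0∞) (α β : ℝ) : Phi φ α β = Phi φ β α := by
  simp only [Phi, abs_sub_comm α β, max_comm α β, min_comm α β]

lemma G_mono (φ : ℝ → ℝ≥0∞) : Monotone (fun x => ∫⁻ s in Ioc (-1:ℝ) x, φ s) :=
  fun a b hab => lintegral_mono_set (Ioc_subset_Ioc_right hab)

lemma G_le_add (φ : ℝ → ℝ≥0∞) (a b : ℝ) :
    (∫⁻ s in Ioc (-1:ℝ) b, φ s) ≤ (∫⁻ s in Ioc (-1:ℝ) a, φ s) + ∫⁻ s in Ioc a b, φ s := by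
  refine le_trans (lintegral_mono_set ?_) (lintegral_union_le _ _ _)
  intro s hs
  simp only [mem_union, mem_Ioc] at hs ⊢
  rcases le_or_gt s a with h | h
  · exact Or.inl ⟨hs.1, h⟩
  · exact Or.inr ⟨h, hs.2⟩

lemma Phi_measurable (φ : ℝ → ℝ≥0∞) : Measurable (Function.uncurry (Phi φ)) := by
  have hG : Measurable (fun x => ∫⁻ s in Ioc (-1:ℝ) x, φ s) := (G_mono φ).measurable
  have hmax : Measurable (fun p : ℝ × ℝ => ∫⁻ s in Ioc (-1:ℝ) (max p.1 p.2), φ s) :=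
    hG.comp (measurable_fst.max measurable_snd)
  have hmin : Measurable (fun p : ℝ × ℝ => ∫⁻ s in Ioc (-1:ℝ) (min p.1 p.2), φ s) :=
    hG.comp (measurable_fst.min measurable_snd)
  have habs : Measurable (fun p : ℝ × ℝ => |p.1 - p.2|) :=
    (continuous_fst.sub continuous_snd).abs.measurable
  have hset : MeasurableSet {p : ℝ × ℝ | |p.1 - p.2| ≤ 1} :=
    measurableSet_le habs measurable_const
  show Measurable fun p : ℝ × ℝ => Phi φ p.1 p.2
  simp only [Phi]
  apply Measurable.ite hset
  · exact (hmax.sub hmin).div (ENNReal.measurable_ofReal.comp habs)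
  · exact ((measurable_const.sub hmax).add hmin).div
      (ENNReal.measurable_ofReal.comp (measurable_const.sub habs))

lemma key (φ : ℝ → ℝ≥0∞) (hφ : Measurable φ) {α : ℝ} (hα : α ∈ Ioc (-1:ℝ) 1) :
    ∫⁻ β in Ioc (-1:ℝ) 1, Phi φ α β ^ 2 ≤ 48 * ∫⁻ s, φ s ^ 2 := by
  obtain ⟨hα1, hα2⟩ := hα
  set M := ∫⁻ s, φ s ^ 2 with hMdef
  by_cases hMtop : M = ⊤
  · rw [hMtop, ENNReal.mul_top (by norm_num)]; exact le_top
  set G : ℝ → ℝ≥0∞ := fun x => ∫⁻ s in Ioc (-1:ℝ) x, φ s with hGdef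
  have hCS : ∀ a b : ℝ, (∫⁻ s in Ioc a b, φ s) ^ 2 ≤ M * ENNReal.ofReal (b - a) := by
    intro a b
    calc (∫⁻ s in Ioc a b, φ s) ^ 2
        ≤ (∫⁻ s in Ioc a b, φ s ^ 2) * (volume.restrict (Ioc a b)) univ :=
          sq_lintegral_le _ hφ.aemeasurable
      _ ≤ M * ENNReal.ofReal (b - a) := by
          apply mul_le_mul'
          · exact setLIntegral_le_lintegral _ _
          · rw [Measure.restrict_apply_univ, Real.volume_Ioc]
  have hGfin : ∀ x : ℝ, G x ≠ ⊤ := by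
    intro x
    have h2 := hCS (-1) x
    intro h
    rw [hGdef] at h
    simp only [h] at h2
    rw [ENNReal.top_pow (by norm_num)] at h2
    exact (ENNReal.mul_ne_top hMtop ENNReal.ofReal_ne_top) (top_le_iff.mp h2)
  -- Region 1 : Icc (α-1) α
  have T1 : ∫⁻ β in Icc (α-1) α, Phi φ α β ^ 2 ≤ 4 * M := by
    rw [← Measure.restrict_congr_set Ico_ae_eq_Icc]
    calc ∫⁻ β in Ico (α-1) α, Phi φ α β ^ 2
        ≤ ∫⁻ β in Ico (α-1) α, ((∫⁻ s in Ioc β α, φ s) / ENNReal.ofReal (α - β)) ^ 2 := by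
          apply lintegral_mono_ae
          filter_upwards [ae_restrict_mem measurableSet_Ico] with β hβ
          simp only [mem_Ico] at hβ
          have h2 : max α β = α := max_eq_left hβ.2.le
          have h3 : min α β = β := min_eq_right hβ.2.le
          simp only [Phi, h2, h3, abs_of_nonneg (by linarith [hβ.2] : (0:ℝ) ≤ α - β)]
          rw [if_pos (by linarith [hβ.1] : α - β ≤ 1)]
          exact pow_le_pow_left'
            (ENNReal.div_le_div_right (tsub_le_iff_left.mpr (G_le_add φ β α)) _) 2
      _ ≤ 4 * ∫⁻ s in Ioc (α-1) α, φ s ^ 2 := hardy_bwd φ hφ (α-1) α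
      _ ≤ 4 * M := by gcongr; exact setLIntegral_le_lintegral _ _
  -- Region 2 : Ioc α (α+1)
  have T2 : ∫⁻ β in Ioc α (α+1), Phi φ α β ^ 2 ≤ 4 * M := by
    calc ∫⁻ β in Ioc α (α+1), Phi φ α β ^ 2
        ≤ ∫⁻ β in Ioc α (α+1), ((∫⁻ s in Ioc α β, φ s) / ENNReal.ofReal (β - α)) ^ 2 := by
          apply lintegral_mono_ae
          filter_upwards [ae_restrict_mem measurableSet_Ioc] with β hβ
          simp only [mem_Ioc] at hβ
          have h2 : max α β = β := max_eq_right hβ.1.le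
          have h3 : min α β = α := min_eq_left hβ.1.le
          have h4 : |α - β| = β - α := by rw [abs_of_nonpos (by linarith [hβ.1])]; ring
          simp only [Phi, h2, h3, h4]
          rw [if_pos (by linarith [hβ.2] : β - α ≤ 1)]
          exact pow_le_pow_left'
            (ENNReal.div_le_div_right (tsub_le_iff_left.mpr (G_le_add φ α β)) _) 2
      _ ≤ 4 * ∫⁻ s in Ioc α (α+1), φ s ^ 2 := hardy_fwd φ hφ α (α+1)
      _ ≤ 4 * M := by gcongr; exact setLIntegral_le_lintegral _ _
  -- Region 3 : Ioo (-1) (α-1)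
  have T3 : ∫⁻ β in Ioo (-1:ℝ) (α-1), Phi φ α β ^ 2 ≤ 20 * M := by
    have hpt : ∀ β ∈ Ioo (-1:ℝ) (α-1), Phi φ α β ^ 2
        ≤ 4 * ((G 1 - G α) / ENNReal.ofReal (2 - (α - β))) ^ 2
          + 4 * (G β / ENNReal.ofReal (2 - (α - β))) ^ 2 := by
      intro β hβ
      simp only [mem_Ioo] at hβ
      have h2 : max α β = α := max_eq_left (by linarith [hβ.2])
      have h3 : min α β = β := min_eq_right (by linarith [hβ.2])
      have h4 : |α - β| = α - β := abs_of_nonneg (by linarith [hβ.2])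
      simp only [Phi, h2, h3, h4]
      rw [if_neg (by push_neg; linarith [hβ.2] : ¬ (α - β ≤ 1))]
      rw [ENNReal.add_div]
      exact add_sq_le_four _ _
    calc ∫⁻ β in Ioo (-1:ℝ) (α-1), Phi φ α β ^ 2
        ≤ ∫⁻ β in Ioo (-1:ℝ) (α-1),
            (4 * ((G 1 - G α) / ENNReal.ofReal (2 - (α - β))) ^ 2
              + 4 * (G β / ENNReal.ofReal (2 - (α - β))) ^ 2) := by
          apply lintegral_mono_ae
          filter_upwards [ae_restrict_mem measurableSet_Ioo] with β hβ
          exact hpt β hβ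
      _ = (∫⁻ β in Ioo (-1:ℝ) (α-1), 4 * ((G 1 - G α) / ENNReal.ofReal (2 - (α - β))) ^ 2)
          + ∫⁻ β in Ioo (-1:ℝ) (α-1), 4 * (G β / ENNReal.ofReal (2 - (α - β))) ^ 2 := by
          apply lintegral_add_left
          apply Measurable.const_mul
          apply Measurable.pow_const
          apply Measurable.div measurable_const
          exact ENNReal.measurable_ofReal.comp
            (continuous_const.sub (continuous_const.sub continuous_id)).measurable
      _ ≤ 4 * M + 4 * (4 * M) := by
          apply add_le_add
          · rw [lintegral_const_mul' _ _ (by norm_num)]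
            apply mul_le_mul_right
            rcases eq_or_lt_of_le hα2 with heq | hlt
            · have hz : G 1 - G α = 0 := by rw [← heq]; exact tsub_self _
              simp [hz, ENNReal.zero_div]
            · have hc : (0:ℝ) < 1 - α := by linarith
              calc ∫⁻ β in Ioo (-1:ℝ) (α-1),
                    ((G 1 - G α) / ENNReal.ofReal (2 - (α - β))) ^ 2
                  = ∫⁻ β in Ioo (-1:ℝ) (α-1), (G 1 - G α) ^ 2 *
                      ((ENNReal.ofReal ((1 - α) + (β - (-1)))) ^ 2)⁻¹ := by
                    apply setLIntegral_congr_fun measurableSet_Ioo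
                    intro β _
                    dsimp only
                    rw [div_eq_mul_inv, mul_pow, ENNReal.inv_pow,
                      show (2 - (α - β)) = (1 - α) + (β - (-1)) by ring]
                _ = (G 1 - G α) ^ 2 * ∫⁻ β in Ioo (-1:ℝ) (α-1),
                      ((ENNReal.ofReal ((1 - α) + (β - (-1)))) ^ 2)⁻¹ := by
                    apply lintegral_const_mul'
                    exact ENNReal.pow_ne_top (ne_top_of_le_ne_top (hGfin 1) tsub_le_self)
                _ ≤ (M * ENNReal.ofReal (1 - α)) * ENNReal.ofReal (1 - α)⁻¹ := by
                    apply mul_le_mul'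
                    · calc (G 1 - G α) ^ 2 ≤ (∫⁻ s in Ioc α 1, φ s) ^ 2 :=
                          pow_le_pow_left' (tsub_le_iff_left.mpr (G_le_add φ α 1)) 2
                        _ ≤ M * ENNReal.ofReal (1 - α) := hCS α 1
                    · refine le_trans (lintegral_mono_set Ioo_subset_Ioc_self) ?_
                      exact lint_inv_sq hc (-1) (α-1)
                _ ≤ M := by
                    rw [mul_assoc, ← ENNReal.ofReal_mul (by linarith),
                      mul_inv_cancel₀ (by linarith : (1:ℝ) - α ≠ 0)]
                    simp
          · rw [lintegral_const_mul' _ _ (by norm_num)]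
            apply mul_le_mul_right
            calc ∫⁻ β in Ioo (-1:ℝ) (α-1), (G β / ENNReal.ofReal (2 - (α - β))) ^ 2
                ≤ ∫⁻ β in Ioo (-1:ℝ) (α-1),
                    ((∫⁻ s in Ioc (-1:ℝ) β, φ s) / ENNReal.ofReal (β - (-1))) ^ 2 := by
                  apply lintegral_mono_ae
                  filter_upwards [ae_restrict_mem measurableSet_Ioo] with β hβ
                  simp only [mem_Ioo] at hβ
                  apply pow_le_pow_left' _ 2
                  apply ENNReal.div_le_div_left
                  apply ENNReal.ofReal_le_ofReal
                  linarith
              _ ≤ ∫⁻ β in Ioc (-1:ℝ) (α-1),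
                    ((∫⁻ s in Ioc (-1:ℝ) β, φ s) / ENNReal.ofReal (β - (-1))) ^ 2 :=
                  lintegral_mono_set Ioo_subset_Ioc_self
              _ ≤ 4 * ∫⁻ s in Ioc (-1:ℝ) (α-1), φ s ^ 2 := hardy_fwd φ hφ (-1) (α-1)
              _ ≤ 4 * M := by gcongr; exact setLIntegral_le_lintegral _ _
      _ ≤ 20 * M := le_of_eq (by ring)
  -- Region 4 : Ioc (α+1) 1
  have T4 : ∫⁻ β in Ioc (α+1) 1, Phi φ α β ^ 2 ≤ 20 * M := by
    have hpt : ∀ β ∈ Ioc (α+1) (1:ℝ), Phi φ α β ^ 2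
        ≤ 4 * ((G 1 - G β) / ENNReal.ofReal (2 - (β - α))) ^ 2
          + 4 * (G α / ENNReal.ofReal (2 - (β - α))) ^ 2 := by
      intro β hβ
      simp only [mem_Ioc] at hβ
      have h2 : max α β = β := max_eq_right (by linarith [hβ.1])
      have h3 : min α β = α := min_eq_left (by linarith [hβ.1])
      have h4 : |α - β| = β - α := by rw [abs_of_nonpos (by linarith [hβ.1])]; ring
      simp only [Phi, h2, h3, h4]
      rw [if_neg (by push_neg; linarith [hβ.1] : ¬ (β - α ≤ 1))]
      rw [ENNReal.add_div]
      exact add_sq_le_four _ _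
    calc ∫⁻ β in Ioc (α+1) (1:ℝ), Phi φ α β ^ 2
        ≤ ∫⁻ β in Ioc (α+1) (1:ℝ),
            (4 * ((G 1 - G β) / ENNReal.ofReal (2 - (β - α))) ^ 2
              + 4 * (G α / ENNReal.ofReal (2 - (β - α))) ^ 2) := by
          apply lintegral_mono_ae
          filter_upwards [ae_restrict_mem measurableSet_Ioc] with β hβ
          exact hpt β hβ
      _ = (∫⁻ β in Ioc (α+1) (1:ℝ), 4 * ((G 1 - G β) / ENNReal.ofReal (2 - (β - α))) ^ 2)
          + ∫⁻ β in Ioc (α+1) (1:ℝ), 4 * (G α / ENNReal.ofReal (2 - (β - α))) ^ 2 := by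
          apply lintegral_add_left
          apply Measurable.const_mul
          apply Measurable.pow_const
          apply Measurable.div
          · exact (measurable_const.sub ((G_mono φ).measurable))
          · exact ENNReal.measurable_ofReal.comp
              (continuous_const.sub (continuous_id.sub continuous_const)).measurable
      _ ≤ 4 * (4 * M) + 4 * M := by
          apply add_le_add
          · rw [lintegral_const_mul' _ _ (by norm_num)]
            apply mul_le_mul_right
            calc ∫⁻ β in Ioc (α+1) (1:ℝ), ((G 1 - G β) / ENNReal.ofReal (2 - (β - α))) ^ 2
                ≤ ∫⁻ β in Ioc (α+1) (1:ℝ),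
                    ((∫⁻ s in Ioc β 1, φ s) / ENNReal.ofReal (1 - β)) ^ 2 := by
                  apply lintegral_mono_ae
                  filter_upwards [ae_restrict_mem measurableSet_Ioc] with β hβ
                  simp only [mem_Ioc] at hβ
                  apply pow_le_pow_left' _ 2
                  calc (G 1 - G β) / ENNReal.ofReal (2 - (β - α))
                      ≤ (G 1 - G β) / ENNReal.ofReal (1 - β) := by
                        apply ENNReal.div_le_div_left
                        apply ENNReal.ofReal_le_ofReal
                        linarith
                    _ ≤ (∫⁻ s in Ioc β 1, φ s) / ENNReal.ofReal (1 - β) :=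
                        ENNReal.div_le_div_right (tsub_le_iff_left.mpr (G_le_add φ β 1)) _
              _ = ∫⁻ β in Ico (α+1) (1:ℝ),
                    ((∫⁻ s in Ioc β 1, φ s) / ENNReal.ofReal (1 - β)) ^ 2 := by
                  rw [Measure.restrict_congr_set Ioc_ae_eq_Icc,
                    ← Measure.restrict_congr_set Ico_ae_eq_Icc]
              _ ≤ 4 * ∫⁻ s in Ioc (α+1) (1:ℝ), φ s ^ 2 := hardy_bwd φ hφ (α+1) 1
              _ ≤ 4 * M := by gcongr; exact setLIntegral_le_lintegral _ _
          · rw [lintegral_const_mul' _ _ (by norm_num)]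
            apply mul_le_mul_right
            have hc : (0:ℝ) < 1 + α := by linarith
            calc ∫⁻ β in Ioc (α+1) (1:ℝ), (G α / ENNReal.ofReal (2 - (β - α))) ^ 2
                = ∫⁻ β in Ioc (α+1) (1:ℝ), G α ^ 2 *
                    ((ENNReal.ofReal ((1 + α) + (1 - β))) ^ 2)⁻¹ := by
                  apply setLIntegral_congr_fun measurableSet_Ioc
                  intro β _
                  dsimp only
                  rw [div_eq_mul_inv, mul_pow, ENNReal.inv_pow,
                    show (2 - (β - α)) = (1 + α) + (1 - β) by ring]
              _ = G α ^ 2 * ∫⁻ β in Ioc (α+1) (1:ℝ),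
                    ((ENNReal.ofReal ((1 + α) + (1 - β))) ^ 2)⁻¹ := by
                  apply lintegral_const_mul'
                  exact ENNReal.pow_ne_top (hGfin α)
              _ ≤ (M * ENNReal.ofReal (α - (-1))) * ENNReal.ofReal (1 + α)⁻¹ := by
                  apply mul_le_mul'
                  · exact hCS (-1) α
                  · exact lint_inv_sq' hc (α+1) 1
              _ ≤ M := by
                  rw [mul_assoc, show α - (-1:ℝ) = 1 + α by ring,
                    ← ENNReal.ofReal_mul (by linarith),
                    mul_inv_cancel₀ (by linarith : (1:ℝ) + α ≠ 0)]
                  simp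
      _ ≤ 20 * M := le_of_eq (by ring)
  -- Combine the four regions
  have cover : Ioc (-1:ℝ) 1 ⊆
      ((Icc (α-1) α ∪ Ioc α (α+1)) ∪ Ioo (-1) (α-1)) ∪ Ioc (α+1) 1 := by
    intro β hβ
    simp only [mem_Ioc] at hβ
    simp only [mem_union, mem_Icc, mem_Ioc, mem_Ioo]
    rcases le_or_gt β α with h1 | h1
    · rcases le_or_gt (α-1) β with h2 | h2
      · exact Or.inl (Or.inl (Or.inl ⟨h2, h1⟩))
      · exact Or.inl (Or.inr ⟨hβ.1, h2⟩)
    · rcases le_or_gt β (α+1) with h2 | h2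
      · exact Or.inl (Or.inl (Or.inr ⟨h1, h2⟩))
      · exact Or.inr ⟨h2, hβ.2⟩
  calc ∫⁻ β in Ioc (-1:ℝ) 1, Phi φ α β ^ 2
      ≤ ∫⁻ β in ((Icc (α-1) α ∪ Ioc α (α+1)) ∪ Ioo (-1) (α-1)) ∪ Ioc (α+1) 1,
          Phi φ α β ^ 2 := lintegral_mono_set cover
    _ ≤ (((∫⁻ β in Icc (α-1) α, Phi φ α β ^ 2) + ∫⁻ β in Ioc α (α+1), Phi φ α β ^ 2)
          + ∫⁻ β in Ioo (-1) (α-1), Phi φ α β ^ 2) + ∫⁻ β in Ioc (α+1) 1, Phi φ α β ^ 2 := by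
        refine le_trans (lintegral_union_le _ _ _) ?_
        apply add_le_add_left
        refine le_trans (lintegral_union_le _ _ _) ?_
        apply add_le_add_left
        exact lintegral_union_le _ _ _
    _ ≤ ((4 * M + 4 * M) + 20 * M) + 20 * M := by
        exact add_le_add (add_le_add (add_le_add T1 T2) T3) T4
    _ = 48 * M := by ring




/-- Fundamental theorem of calculus bound. -/
lemma ftc_norm (f f' : ℝ → ℂ) (hf : ContinuousOn f (Icc (-1) 1))
    (hderiv : ∀ x ∈ Ioo (-1:ℝ) 1, HasDerivAt f (f' x) x)
    (hint : IntegrableOn f' (Ioo (-1:ℝ) 1))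
    {a b : ℝ} (h1 : -1 ≤ a) (h2 : a ≤ b) (h3 : b ≤ 1) :
    ‖f b - f a‖ ≤ ∫ s in Ioc a b, ‖f' s‖ := by
  have hsub : Ioo a b ⊆ Ioo (-1:ℝ) 1 := Ioo_subset_Ioo h1 h3
  have hii : IntervalIntegrable f' volume a b := by
    rw [intervalIntegrable_iff_integrableOn_Ioc_of_le h2,
      integrableOn_Ioc_iff_integrableOn_Ioo]
    exact hint.mono_set hsub
  have hcont : ContinuousOn f (uIcc a b) := by
    rw [uIcc_of_le h2]
    exact hf.mono (Icc_subset_Icc h1 h3)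
  have hd : ∀ x ∈ Ioo (min a b) (max a b), HasDerivWithinAt f (f' x) (Ioi x) x := by
    intro x hx
    rw [min_eq_left h2, max_eq_right h2] at hx
    exact (hderiv x (hsub hx)).hasDerivWithinAt
  have hftc := intervalIntegral.integral_eq_sub_of_hasDeriv_right hcont hd hii
  rw [← hftc, intervalIntegral.integral_of_le h2]
  exact norm_integral_le_integral_norm _

/-- Periodic FTC bound through the endpoints. -/
lemma ftc_norm_per (f f' : ℝ → ℂ) (hf : ContinuousOn f (Icc (-1) 1)) (hper : f 1 = f (-1))
    (hderiv : ∀ x ∈ Ioo (-1:ℝ) 1, HasDerivAt f (f' x) x)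
    (hint : IntegrableOn f' (Ioo (-1:ℝ) 1))
    {a b : ℝ} (h1 : -1 ≤ a) (h2 : a ≤ b) (h3 : b ≤ 1) :
    ‖f b - f a‖ ≤ (∫ s in Ioc b 1, ‖f' s‖) + ∫ s in Ioc (-1:ℝ) a, ‖f' s‖ := by
  have hkey : f b - f a = -((f 1 - f b) + (f a - f (-1))) := by
    rw [hper]; ring
  rw [hkey, norm_neg]
  calc ‖(f 1 - f b) + (f a - f (-1))‖ ≤ ‖f 1 - f b‖ + ‖f a - f (-1)‖ := norm_add_le _ _
    _ ≤ (∫ s in Ioc b 1, ‖f' s‖) + ∫ s in Ioc (-1:ℝ) a, ‖f' s‖ := by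
        apply add_le_add
        · exact ftc_norm f f' hf hderiv hint (by linarith) h3 le_rfl
        · exact ftc_norm f f' hf hderiv hint le_rfl h1 (by linarith)

/-- The pointwise domination of the commutator kernel factor by `Phi`. -/
lemma dominate (f f' : ℝ → ℂ) (φ : ℝ → ℝ≥0∞)
    (hf : ContinuousOn f (Icc (-1) 1)) (hper : f 1 = f (-1))
    (hderiv : ∀ x ∈ Ioo (-1:ℝ) 1, HasDerivAt f (f' x) x)
    (hint : IntegrableOn f' (Ioo (-1:ℝ) 1))
    (hrep : ∀ a b : ℝ, -1 ≤ a → a ≤ b → b ≤ 1 →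
      ∫⁻ s in Ioc a b, φ s = ENNReal.ofReal (∫ s in Ioc a b, ‖f' s‖))
    {α β : ℝ} (hα : α ∈ Ioc (-1:ℝ) 1) (hβ : β ∈ Ioc (-1:ℝ) 1) :
    (‖(f α - f β) / (Real.sin (Real.pi / 2 * (α - β)) : ℂ)‖₊ : ℝ≥0∞) ≤ Phi φ α β := by
  obtain ⟨hα1, hα2⟩ := hα
  obtain ⟨hβ1, hβ2⟩ := hβ
  by_cases heq : α = β
  · subst heq
    simp
  set m := min α β with hm
  set Mx := max α β with hMx
  have hm1 : -1 < m := lt_min hα1 hβ1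
  have hMx1 : Mx ≤ 1 := max_le hα2 hβ2
  have hmM : m < Mx := min_lt_max.mpr heq
  have habs : |α - β| = Mx - m := by
    rw [hMx, hm]
    rcases le_total α β with hle | hle
    · rw [max_eq_right hle, min_eq_left hle, abs_of_nonpos (by linarith)]; ring
    · rw [max_eq_left hle, min_eq_right hle, abs_of_nonneg (by linarith)]
  have hnormeq : ‖f α - f β‖ = ‖f Mx - f m‖ := by
    rw [hMx, hm]
    rcases le_total α β with hle | hle
    · rw [max_eq_right hle, min_eq_left hle, norm_sub_rev]
    · rw [max_eq_left hle, min_eq_right hle]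
  have hnorm : ‖(f α - f β) / (Real.sin (Real.pi / 2 * (α - β)) : ℂ)‖
      = ‖f α - f β‖ / |Real.sin (Real.pi / 2 * (α - β))| := by
    rw [norm_div, Complex.norm_real, Real.norm_eq_abs]
  have hcoe : (‖(f α - f β) / (Real.sin (Real.pi / 2 * (α - β)) : ℂ)‖₊ : ℝ≥0∞)
      = ENNReal.ofReal (‖f α - f β‖ / |Real.sin (Real.pi / 2 * (α - β))|) := by
    rw [← hnorm, ← ofReal_norm_eq_coe_nnnorm]
  rw [hcoe]
  have hGsub : (∫⁻ s in Ioc (-1:ℝ) Mx, φ s) - (∫⁻ s in Ioc (-1:ℝ) m, φ s)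
      = ∫⁻ s in Ioc m Mx, φ s := by
    have hun : Ioc (-1:ℝ) Mx = Ioc (-1:ℝ) m ∪ Ioc m Mx :=
      (Ioc_union_Ioc_eq_Ioc (by linarith) hmM.le).symm
    rw [hun, lintegral_union measurableSet_Ioc (Set.Ioc_disjoint_Ioc_of_le le_rfl)]
    rw [ENNReal.add_sub_cancel_left]
    rw [hrep (-1) m (le_refl _) (by linarith) (by linarith)]
    exact ENNReal.ofReal_ne_top
  have hGsub1 : (∫⁻ s in Ioc (-1:ℝ) 1, φ s) - (∫⁻ s in Ioc (-1:ℝ) Mx, φ s)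
      = ∫⁻ s in Ioc Mx 1, φ s := by
    have hun : Ioc (-1:ℝ) 1 = Ioc (-1:ℝ) Mx ∪ Ioc Mx 1 :=
      (Ioc_union_Ioc_eq_Ioc (by linarith) hMx1).symm
    rw [hun, lintegral_union measurableSet_Ioc (Set.Ioc_disjoint_Ioc_of_le le_rfl)]
    rw [ENNReal.add_sub_cancel_left]
    rw [hrep (-1) Mx (le_refl _) (by linarith) hMx1]
    exact ENNReal.ofReal_ne_top
  by_cases hcase : |α - β| ≤ 1
  · -- short arc
    have hsin : |α - β| ≤ |Real.sin (Real.pi / 2 * (α - β))| := abs_le_abs_sin hcase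
    have habspos : (0:ℝ) < |α - β| := by rw [habs]; linarith
    have hDnn : (0:ℝ) ≤ ∫ s in Ioc m Mx, ‖f' s‖ :=
      integral_nonneg (fun s => norm_nonneg _)
    have hbound : ‖f α - f β‖ / |Real.sin (Real.pi / 2 * (α - β))|
        ≤ (∫ s in Ioc m Mx, ‖f' s‖) / |α - β| := by
      apply div_le_div₀ hDnn _ habspos hsin
      rw [hnormeq]
      exact ftc_norm f f' hf hderiv hint hm1.le hmM.le hMx1
    refine le_trans (ENNReal.ofReal_le_ofReal hbound) ?_
    rw [ENNReal.ofReal_div_of_pos habspos]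
    simp only [Phi, if_pos hcase]
    rw [hGsub, hrep m Mx hm1.le hmM.le hMx1]
  · -- long arc
    push_neg at hcase
    have habs2 : |α - β| ≤ 2 := by rw [habs]; linarith
    have hsin : 2 - |α - β| ≤ |Real.sin (Real.pi / 2 * (α - β))| :=
      two_sub_abs_le_abs_sin hcase.le habs2
    have hpos : (0:ℝ) < 2 - |α - β| := by
      rw [habs]; linarith
    set E : ℝ := (∫ s in Ioc Mx 1, ‖f' s‖) + ∫ s in Ioc (-1:ℝ) m, ‖f' s‖ with hE
    have hEnn : (0:ℝ) ≤ E := by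
      apply add_nonneg <;> exact integral_nonneg (fun s => norm_nonneg _)
    have hbound : ‖f α - f β‖ / |Real.sin (Real.pi / 2 * (α - β))|
        ≤ E / (2 - |α - β|) := by
      apply div_le_div₀ hEnn _ hpos hsin
      rw [hnormeq]
      exact ftc_norm_per f f' hf hper hderiv hint hm1.le hmM.le hMx1
    refine le_trans (ENNReal.ofReal_le_ofReal hbound) ?_
    rw [ENNReal.ofReal_div_of_pos hpos]
    simp only [Phi, if_neg (not_le.mpr hcase)]
    rw [hGsub1, hrep Mx 1 (by linarith) hMx1 le_rfl,
      hrep (-1) m le_rfl (by linarith) (by linarith), hE,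
      ENNReal.ofReal_add (integral_nonneg (fun s => norm_nonneg _))
        (integral_nonneg (fun s => norm_nonneg _))]




/-- key integrability upgrade: `L²` on a bounded interval gives `L¹`. -/
lemma int_of_sq {f' : ℝ → ℂ} (hcont : ContinuousOn f' (Ioo (-1:ℝ) 1))
    (hsq : IntegrableOn (fun x => ‖f' x‖ ^ 2) (Ioo (-1:ℝ) 1)) :
    IntegrableOn f' (Ioo (-1:ℝ) 1) := by
  have hmeas : AEStronglyMeasurable f' (volume.restrict (Ioo (-1:ℝ) 1)) :=
    hcont.aestronglyMeasurable measurableSet_Ioo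
  apply Integrable.mono' (g := fun x => 1 + ‖f' x‖ ^ 2) _ hmeas
  · apply Filter.Eventually.of_forall
    intro x
    nlinarith [sq_nonneg (‖f' x‖ - 1), norm_nonneg (f' x)]
  · apply Integrable.add
    · exact integrableOn_const (by simp [Real.volume_Ioo])
    · exact hsq

/-- representation of the interval lintegrals of the (measurable version of the)
indicator of the norm of the derivative -/
lemma rep_lemma {f' : ℝ → ℂ} (hcont : ContinuousOn f' (Ioo (-1:ℝ) 1))
    (hint : IntegrableOn f' (Ioo (-1:ℝ) 1))
    {φ : ℝ → ℝ≥0∞}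
    (heq : (fun s => (Ioo (-1:ℝ) 1).indicator (fun t => (‖f' t‖₊ : ℝ≥0∞)) s) =ᵐ[volume] φ) :
    ∀ a b : ℝ, -1 ≤ a → a ≤ b → b ≤ 1 →
      ∫⁻ s in Ioc a b, φ s = ENNReal.ofReal (∫ s in Ioc a b, ‖f' s‖) := by
  intro a b h1 h2 h3
  have hnot1 : (volume.restrict (Ioc a b)) {(1:ℝ)} = 0 := by
    refine le_antisymm (le_trans (Measure.restrict_apply_le _ _) (by simp)) zero_le
  have hae1 : ∀ᵐ s ∂(volume.restrict (Ioc a b)), s ≠ 1 := by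
    rw [ae_iff]
    convert hnot1 using 2
    ext s
    simp
  calc ∫⁻ s in Ioc a b, φ s
      = ∫⁻ s in Ioc a b, (Ioo (-1:ℝ) 1).indicator (fun t => (‖f' t‖₊ : ℝ≥0∞)) s :=
        lintegral_congr_ae (ae_restrict_of_ae heq.symm)
    _ = ∫⁻ s in Ioc a b, ENNReal.ofReal ‖f' s‖ := by
        apply lintegral_congr_ae
        filter_upwards [ae_restrict_mem measurableSet_Ioc, hae1] with s hs hs1
        simp only [mem_Ioc] at hs
        rw [indicator_of_mem (by
          simp only [mem_Ioo]
          constructor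
          · linarith [hs.1]
          · rcases lt_or_eq_of_le (hs.2.trans h3) with h | h
            · exact h
            · exact absurd h hs1), ofReal_norm_eq_coe_nnnorm]
    _ = ENNReal.ofReal (∫ s in Ioc a b, ‖f' s‖) := by
        rw [← ofReal_integral_eq_lintegral_ofReal]
        · apply Integrable.norm
          have : IntegrableOn f' (Ioc a b) := by
            rw [integrableOn_Ioc_iff_integrableOn_Ioo]
            exact hint.mono_set (Ioo_subset_Ioo h1 h3)
          exact this
        · exact Filter.Eventually.of_forall (fun s => norm_nonneg _)

/-- computing the global square lintegral -/
lemma Msq_lemma {f' : ℝ → ℂ}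
    (hsq : IntegrableOn (fun x => ‖f' x‖ ^ 2) (Ioo (-1:ℝ) 1))
    {φ : ℝ → ℝ≥0∞}
    (heq : (fun s => (Ioo (-1:ℝ) 1).indicator (fun t => (‖f' t‖₊ : ℝ≥0∞)) s) =ᵐ[volume] φ) :
    ∫⁻ s, φ s ^ 2 = ENNReal.ofReal (∫ x in Ioo (-1:ℝ) 1, ‖f' x‖ ^ 2) := by
  calc ∫⁻ s, φ s ^ 2
      = ∫⁻ s, ((Ioo (-1:ℝ) 1).indicator (fun t => (‖f' t‖₊ : ℝ≥0∞)) s) ^ 2 :=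
        lintegral_congr_ae (heq.symm.mono (fun s hs => by dsimp only; rw [hs]))
    _ = ∫⁻ s, (Ioo (-1:ℝ) 1).indicator (fun t => (‖f' t‖₊ : ℝ≥0∞) ^ 2) s := by
        apply lintegral_congr
        intro s
        by_cases hs : s ∈ Ioo (-1:ℝ) 1
        · simp [indicator_of_mem hs]
        · simp [indicator_of_notMem hs]
    _ = ∫⁻ s in Ioo (-1:ℝ) 1, (‖f' s‖₊ : ℝ≥0∞) ^ 2 :=
        lintegral_indicator measurableSet_Ioo _
    _ = ∫⁻ s in Ioo (-1:ℝ) 1, ENNReal.ofReal (‖f' s‖ ^ 2) := by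
        apply lintegral_congr
        intro s
        rw [← ofReal_norm_eq_coe_nnnorm, ← ENNReal.ofReal_pow (norm_nonneg _)]
    _ = ENNReal.ofReal (∫ x in Ioo (-1:ℝ) 1, ‖f' x‖ ^ 2) := by
        rw [← ofReal_integral_eq_lintegral_ofReal hsq]
        exact Filter.Eventually.of_forall (fun s => sq_nonneg _)

set_option maxHeartbeats 2000000 in
/-- Higher-order Calderon commutator estimate:
`‖[f,g;h]‖_{L²} ≤ C ‖f'‖_{L²} ‖g'‖_{L²} ‖h‖_{L²}` with a universal constant `C`, where
`[f,g;h](α') = (π/4i) ∫ [(f(α')-f(β'))/sin(π/2(α'-β'))] [(g(α')-g(β'))/sin(π/2(α'-β'))] h(β') dβ'`,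
for `f, g` continuous on `[-1,1]`, periodic, `C¹` on `(-1,1)` with `f', g' ∈ L²`, and `h ∈ L²`. -/
theorem calderon_commutator_L2_estimate :
    ∃ C : ℝ, 0 < C ∧ ∀ (f f' g g' h : ℝ → ℂ),
      ContinuousOn f (Icc (-1) 1) → f 1 = f (-1) →
      (∀ x ∈ Ioo (-1:ℝ) 1, HasDerivAt f (f' x) x) →
      ContinuousOn f' (Ioo (-1) 1) →
      IntegrableOn (fun x => ‖f' x‖ ^ 2) (Ioo (-1) 1) →
      ContinuousOn g (Icc (-1) 1) → g 1 = g (-1) →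
      (∀ x ∈ Ioo (-1:ℝ) 1, HasDerivAt g (g' x) x) →
      ContinuousOn g' (Ioo (-1) 1) →
      IntegrableOn (fun x => ‖g' x‖ ^ 2) (Ioo (-1) 1) →
      IntegrableOn (fun x => ‖h x‖ ^ 2) (Ioc (-1) 1) →
      Real.sqrt (∫ α in Ioc (-1:ℝ) 1,
          ‖(Real.pi / (4 * Complex.I)) * ∫ β in Ioc (-1:ℝ) 1,
              ((f α - f β) / (Real.sin (Real.pi / 2 * (α - β)) : ℂ)) *
                ((g α - g β) / (Real.sin (Real.pi / 2 * (α - β)) : ℂ)) * h β‖ ^ 2) ≤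
        C * Real.sqrt (∫ x in Ioo (-1:ℝ) 1, ‖f' x‖ ^ 2) *
          Real.sqrt (∫ x in Ioo (-1:ℝ) 1, ‖g' x‖ ^ 2) *
          Real.sqrt (∫ x in Ioc (-1:ℝ) 1, ‖h x‖ ^ 2) := by
  refine ⟨12 * Real.pi, by positivity, ?_⟩
  intro f f' g g' h hf hfper hfderiv hf'cont hf'sq hg hgper hgderiv hg'cont hg'sq hh
  have hIf0 : 0 ≤ ∫ x in Ioo (-1:ℝ) 1, ‖f' x‖ ^ 2 := integral_nonneg fun x => sq_nonneg _
  have hIg0 : 0 ≤ ∫ x in Ioo (-1:ℝ) 1, ‖g' x‖ ^ 2 := integral_nonneg fun x => sq_nonneg _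
  have hIh0 : 0 ≤ ∫ x in Ioc (-1:ℝ) 1, ‖h x‖ ^ 2 := integral_nonneg fun x => sq_nonneg _
  set If := ∫ x in Ioo (-1:ℝ) 1, ‖f' x‖ ^ 2 with hIfdef
  set Ig := ∫ x in Ioo (-1:ℝ) 1, ‖g' x‖ ^ 2 with hIgdef
  set Ih := ∫ x in Ioc (-1:ℝ) 1, ‖h x‖ ^ 2 with hIhdef
  set c0 : ℂ := ((Real.pi : ℂ) / (4 * Complex.I)) with hc0def
  set T : ℝ → ℂ := fun α => ∫ β in Ioc (-1:ℝ) 1,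
      ((f α - f β) / (Real.sin (Real.pi / 2 * (α - β)) : ℂ)) *
        ((g α - g β) / (Real.sin (Real.pi / 2 * (α - β)) : ℂ)) * h β with hTdef
  by_cases hintcase : IntegrableOn (fun α => ‖c0 * T α‖ ^ 2) (Ioc (-1:ℝ) 1)
  swap
  · rw [integral_undef hintcase, Real.sqrt_zero]
    positivity
  -- measurable surrogates
  have hf'int := int_of_sq hf'cont hf'sq
  have hg'int := int_of_sq hg'cont hg'sq
  have hφf0 : AEMeasurable
      (fun s => (Ioo (-1:ℝ) 1).indicator (fun t => (‖f' t‖₊ : ℝ≥0∞)) s) volume := by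
    rw [aemeasurable_indicator_iff measurableSet_Ioo]
    exact (hf'cont.aestronglyMeasurable measurableSet_Ioo).enorm
  have hφg0 : AEMeasurable
      (fun s => (Ioo (-1:ℝ) 1).indicator (fun t => (‖g' t‖₊ : ℝ≥0∞)) s) volume := by
    rw [aemeasurable_indicator_iff measurableSet_Ioo]
    exact (hg'cont.aestronglyMeasurable measurableSet_Ioo).enorm
  obtain ⟨φf, hφfm, hφfeq⟩ : ∃ φ : ℝ → ℝ≥0∞, Measurable φ ∧
      (fun s => (Ioo (-1:ℝ) 1).indicator (fun t => (‖f' t‖₊ : ℝ≥0∞)) s) =ᵐ[volume] φ :=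
    ⟨hφf0.mk _, hφf0.measurable_mk, hφf0.ae_eq_mk⟩
  obtain ⟨φg, hφgm, hφgeq⟩ : ∃ φ : ℝ → ℝ≥0∞, Measurable φ ∧
      (fun s => (Ioo (-1:ℝ) 1).indicator (fun t => (‖g' t‖₊ : ℝ≥0∞)) s) =ᵐ[volume] φ :=
    ⟨hφg0.mk _, hφg0.measurable_mk, hφg0.ae_eq_mk⟩
  have hrepf := rep_lemma hf'cont hf'int hφfeq
  have hrepg := rep_lemma hg'cont hg'int hφgeq
  have hMf := Msq_lemma hf'sq hφfeq
  have hMg := Msq_lemma hg'sq hφgeq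
  -- the h side
  have hhmeas := hh.1
  obtain ⟨ρ, hρm, hρeq⟩ : ∃ ρ : ℝ → ℝ, Measurable ρ ∧
      (fun x => ‖h x‖ ^ 2) =ᵐ[volume.restrict (Ioc (-1:ℝ) 1)] ρ :=
    ⟨hhmeas.mk _, hhmeas.stronglyMeasurable_mk.measurable, hhmeas.ae_eq_mk⟩
  set θ : ℝ → ℝ≥0∞ := fun x => ENNReal.ofReal (ρ x) with hθdef
  have hθm : Measurable θ := ENNReal.measurable_ofReal.comp hρm
  set η : ℝ → ℝ≥0∞ := fun x => ENNReal.ofReal (Real.sqrt (ρ x)) with hηdef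
  have hηm : Measurable η :=
    ENNReal.measurable_ofReal.comp (Real.continuous_sqrt.measurable.comp hρm)
  have hη1 : (fun x => (‖h x‖₊ : ℝ≥0∞)) =ᵐ[volume.restrict (Ioc (-1:ℝ) 1)] η := by
    filter_upwards [hρeq] with x hx
    simp only [hηdef]
    rw [← hx, Real.sqrt_sq (norm_nonneg _), ofReal_norm_eq_coe_nnnorm]
  have hη2 : ∀ᵐ x ∂(volume.restrict (Ioc (-1:ℝ) 1)), η x ^ 2 = θ x := by
    filter_upwards [hρeq] with x hx
    simp only [hηdef, hθdef]
    rw [← hx, Real.sqrt_sq (norm_nonneg _), ← ENNReal.ofReal_pow (norm_nonneg _)]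
  have hMh : ∫⁻ x in Ioc (-1:ℝ) 1, θ x = ENNReal.ofReal Ih := by
    calc ∫⁻ x in Ioc (-1:ℝ) 1, θ x
        = ∫⁻ x in Ioc (-1:ℝ) 1, ENNReal.ofReal (‖h x‖ ^ 2) := by
          apply lintegral_congr_ae
          filter_upwards [hρeq] with x hx
          simp only [hθdef]
          rw [← hx]
      _ = ENNReal.ofReal Ih := by
          rw [← ofReal_integral_eq_lintegral_ofReal hh
            (Filter.Eventually.of_forall (fun s => sq_nonneg _))]
  -- sections of Phi are measurable
  have hsecf : ∀ α : ℝ, Measurable (fun β => Phi φf α β) :=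
    fun α => (Phi_measurable φf).comp measurable_prodMk_left
  have hsecg : ∀ α : ℝ, Measurable (fun β => Phi φg α β) :=
    fun α => (Phi_measurable φg).comp measurable_prodMk_left
  -- step 1 : pointwise bound for the inner integral
  have step1 : ∀ α ∈ Ioc (-1:ℝ) 1, (‖T α‖₊ : ℝ≥0∞) ^ 2
      ≤ (48 * ENNReal.ofReal If) * ∫⁻ β in Ioc (-1:ℝ) 1, Phi φg α β ^ 2 * θ β := by
    intro α hα
    have a1 : (‖T α‖₊ : ℝ≥0∞) ≤ ∫⁻ β in Ioc (-1:ℝ) 1, Phi φf α β * (Phi φg α β * η β) := by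
      refine le_trans (enorm_integral_le_lintegral_enorm _) ?_
      apply lintegral_mono_ae
      filter_upwards [ae_restrict_mem measurableSet_Ioc, hη1] with β hβ hβ1
      calc (‖((f α - f β) / (Real.sin (Real.pi / 2 * (α - β)) : ℂ)) *
              ((g α - g β) / (Real.sin (Real.pi / 2 * (α - β)) : ℂ)) * h β‖₊ : ℝ≥0∞)
          = (‖(f α - f β) / (Real.sin (Real.pi / 2 * (α - β)) : ℂ)‖₊ : ℝ≥0∞) *
            ((‖(g α - g β) / (Real.sin (Real.pi / 2 * (α - β)) : ℂ)‖₊ : ℝ≥0∞) *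
              (‖h β‖₊ : ℝ≥0∞)) := by
            rw [nnnorm_mul, nnnorm_mul, ENNReal.coe_mul, ENNReal.coe_mul, mul_assoc]
        _ ≤ Phi φf α β * (Phi φg α β * η β) := by
            apply mul_le_mul'
            · exact dominate f f' φf hf hfper hfderiv hf'int hrepf hα hβ
            · apply mul_le_mul'
              · exact dominate g g' φg hg hgper hgderiv hg'int hrepg hα hβ
              · exact le_of_eq hβ1
    calc (‖T α‖₊ : ℝ≥0∞) ^ 2
        ≤ (∫⁻ β in Ioc (-1:ℝ) 1, Phi φf α β * (Phi φg α β * η β)) ^ 2 :=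
          pow_le_pow_left' a1 2
      _ ≤ (∫⁻ β in Ioc (-1:ℝ) 1, Phi φf α β ^ 2) *
            (∫⁻ β in Ioc (-1:ℝ) 1, (Phi φg α β * η β) ^ 2) :=
          lintegral_mul_sq _ (hsecf α).aemeasurable ((hsecg α).mul hηm).aemeasurable
      _ ≤ (48 * ENNReal.ofReal If) * ∫⁻ β in Ioc (-1:ℝ) 1, Phi φg α β ^ 2 * θ β := by
          apply mul_le_mul'
          · refine le_trans (key φf hφfm hα) ?_
            rw [hMf]
          · apply le_of_eq
            apply lintegral_congr_ae
            filter_upwards [hη2] with β hβ2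
            rw [mul_pow, hβ2]
  -- step 2 : integrate in α, swap, apply key again
  have hum : AEMeasurable (Function.uncurry fun α β => Phi φg α β ^ 2 * θ β)
      ((volume.restrict (Ioc (-1:ℝ) 1)).prod (volume.restrict (Ioc (-1:ℝ) 1))) := by
    apply Measurable.aemeasurable
    show Measurable fun p : ℝ × ℝ => Phi φg p.1 p.2 ^ 2 * θ p.2
    exact ((Phi_measurable φg).pow_const 2).mul (hθm.comp measurable_snd)
  have step2 : ∫⁻ α in Ioc (-1:ℝ) 1, (‖T α‖₊ : ℝ≥0∞) ^ 2
      ≤ (48 * ENNReal.ofReal If) * ((48 * ENNReal.ofReal Ig) * ENNReal.ofReal Ih) := by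
    calc ∫⁻ α in Ioc (-1:ℝ) 1, (‖T α‖₊ : ℝ≥0∞) ^ 2
        ≤ ∫⁻ α in Ioc (-1:ℝ) 1,
            (48 * ENNReal.ofReal If) * ∫⁻ β in Ioc (-1:ℝ) 1, Phi φg α β ^ 2 * θ β := by
          apply lintegral_mono_ae
          filter_upwards [ae_restrict_mem measurableSet_Ioc] with α hα
          exact step1 α hα
      _ = (48 * ENNReal.ofReal If) *
            ∫⁻ α in Ioc (-1:ℝ) 1, ∫⁻ β in Ioc (-1:ℝ) 1, Phi φg α β ^ 2 * θ β :=
          lintegral_const_mul' _ _ (ENNReal.mul_ne_top (by simp) ENNReal.ofReal_ne_top)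
      _ = (48 * ENNReal.ofReal If) *
            ∫⁻ β in Ioc (-1:ℝ) 1, ∫⁻ α in Ioc (-1:ℝ) 1, Phi φg α β ^ 2 * θ β := by
          rw [lintegral_lintegral_swap hum]
      _ ≤ (48 * ENNReal.ofReal If) * ((48 * ENNReal.ofReal Ig) * ENNReal.ofReal Ih) := by
          apply mul_le_mul_right
          calc ∫⁻ β in Ioc (-1:ℝ) 1, ∫⁻ α in Ioc (-1:ℝ) 1, Phi φg α β ^ 2 * θ β
              ≤ ∫⁻ β in Ioc (-1:ℝ) 1, (48 * ENNReal.ofReal Ig) * θ β := by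
                apply lintegral_mono_ae
                filter_upwards [ae_restrict_mem measurableSet_Ioc] with β hβ
                rw [lintegral_mul_const' _ _ ENNReal.ofReal_ne_top]
                apply mul_le_mul_left
                calc ∫⁻ α in Ioc (-1:ℝ) 1, Phi φg α β ^ 2
                    = ∫⁻ α in Ioc (-1:ℝ) 1, Phi φg β α ^ 2 := by
                      apply lintegral_congr
                      intro α
                      rw [Phi_symm]
                  _ ≤ 48 * ENNReal.ofReal Ig := by
                      refine le_trans (key φg hφgm hβ) ?_
                      rw [hMg]
            _ = (48 * ENNReal.ofReal Ig) * ENNReal.ofReal Ih := by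
                rw [lintegral_const_mul' _ _
                  (ENNReal.mul_ne_top (by simp) ENNReal.ofReal_ne_top), hMh]
  -- final conversion to real integrals
  have hc0norm : ‖c0‖ = Real.pi / 4 := by
    rw [hc0def, norm_div, Complex.norm_real, Real.norm_eq_abs,
      abs_of_nonneg Real.pi_pos.le, norm_mul, Complex.norm_I, mul_one]
    norm_num
  have hTnn : 0 ≤ᵐ[volume.restrict (Ioc (-1:ℝ) 1)] fun α => ‖c0 * T α‖ ^ 2 :=
    Filter.Eventually.of_forall fun α => sq_nonneg _
  rw [integral_eq_lintegral_of_nonneg_ae hTnn hintcase.1]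
  have hlin : ∫⁻ α in Ioc (-1:ℝ) 1, ENNReal.ofReal (‖c0 * T α‖ ^ 2)
      = ((‖c0‖₊ : ℝ≥0∞)) ^ 2 * ∫⁻ α in Ioc (-1:ℝ) 1, (‖T α‖₊ : ℝ≥0∞) ^ 2 := by
    rw [← lintegral_const_mul' _ _ (by simp : ((‖c0‖₊ : ℝ≥0∞)) ^ 2 ≠ ⊤)]
    apply lintegral_congr
    intro α
    rw [norm_mul, mul_pow, ENNReal.ofReal_mul (by positivity),
      ENNReal.ofReal_pow (norm_nonneg _), ENNReal.ofReal_pow (norm_nonneg _),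
      ofReal_norm_eq_coe_nnnorm, ofReal_norm_eq_coe_nnnorm]
  have hbound : ∫⁻ α in Ioc (-1:ℝ) 1, ENNReal.ofReal (‖c0 * T α‖ ^ 2)
      ≤ ((‖c0‖₊ : ℝ≥0∞)) ^ 2 *
        ((48 * ENNReal.ofReal If) * ((48 * ENNReal.ofReal Ig) * ENNReal.ofReal Ih)) := by
    rw [hlin]
    exact mul_le_mul_right step2 _
  have hfin : ((‖c0‖₊ : ℝ≥0∞)) ^ 2 *
      ((48 * ENNReal.ofReal If) * ((48 * ENNReal.ofReal Ig) * ENNReal.ofReal Ih)) ≠ ⊤ := by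
    apply ENNReal.mul_ne_top (by simp)
    apply ENNReal.mul_ne_top (ENNReal.mul_ne_top (by simp) ENNReal.ofReal_ne_top)
    exact ENNReal.mul_ne_top (ENNReal.mul_ne_top (by simp) ENNReal.ofReal_ne_top)
      ENNReal.ofReal_ne_top
  have htr := ENNReal.toReal_mono hfin hbound
  refine le_trans (Real.sqrt_le_sqrt htr) ?_
  have hval : (((‖c0‖₊ : ℝ≥0∞)) ^ 2 *
      ((48 * ENNReal.ofReal If) * ((48 * ENNReal.ofReal Ig) * ENNReal.ofReal Ih))).toReal
      = (Real.pi / 4) ^ 2 * (48 * If * (48 * Ig * Ih)) := by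
    rw [ENNReal.toReal_mul, ENNReal.toReal_pow, ENNReal.coe_toReal, coe_nnnorm, hc0norm,
      ENNReal.toReal_mul, ENNReal.toReal_mul, ENNReal.toReal_mul, ENNReal.toReal_mul,
      ENNReal.toReal_ofReal hIf0, ENNReal.toReal_ofReal hIg0, ENNReal.toReal_ofReal hIh0]
    norm_num
  rw [hval]
  have hsq : (Real.pi / 4) ^ 2 * (48 * If * (48 * Ig * Ih))
      = (12 * Real.pi * Real.sqrt If * Real.sqrt Ig * Real.sqrt Ih) ^ 2 := by
    have e1 : Real.sqrt If ^ 2 = If := Real.sq_sqrt hIf0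
    have e2 : Real.sqrt Ig ^ 2 = Ig := Real.sq_sqrt hIg0
    have e3 : Real.sqrt Ih ^ 2 = Ih := Real.sq_sqrt hIh0
    have e4 : (12 * Real.pi * Real.sqrt If * Real.sqrt Ig * Real.sqrt Ih) ^ 2
        = 144 * Real.pi ^ 2 * (Real.sqrt If ^ 2) * (Real.sqrt Ig ^ 2) * (Real.sqrt Ih ^ 2) := by
      ring
    rw [e4, e1, e2, e3]
    ring
  rw [hsq, Real.sqrt_sq (mul_nonneg (mul_nonneg (mul_nonneg
    (by positivity : (0:ℝ) ≤ 12 * Real.pi) (Real.sqrt_nonneg _)) (Real.sqrt_nonneg _))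
    (Real.sqrt_nonneg _))]
end

section
/- For any weight ω ≥ 0 on (-1,1) and any ε > 0, every f ∈ C¹(-1,1) ∩ L²(-1,1) satisfies ‖f‖_{L^∞} ≤ C( (1/ε)‖f‖_{L²(1/ω)} + ε‖f'‖_{L²(ω)} + ‖f‖_{L²} ) for a universal constant C, where ‖f‖_{L²(ω)}² = ∫ |f|² ω dx. -/
open MeasureTheory Set ENNReal
open scoped Interval

private lemma rpow_half_sq' (x : ℝ≥0∞) : (x ^ 2) ^ (1/2 : ℝ) = x := by
  rw [← ENNReal.rpow_natCast x 2, ← ENNReal.rpow_mul]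
  norm_num

private lemma sqrt_mul_le_add' (x y : ℝ≥0∞) : (x * y) ^ (1/2 : ℝ) ≤ x + y := by
  have h : x * y ≤ (x + y) ^ 2 := by
    rw [sq]; exact mul_le_mul' le_self_add le_add_self
  calc (x * y) ^ (1/2:ℝ) ≤ ((x+y)^2) ^ (1/2:ℝ) := ENNReal.rpow_le_rpow h (by norm_num)
    _ = x + y := rpow_half_sq' _

/-- Weighted one-dimensional Sobolev inequality on `(-1,1)`: for any measurable weight
`ω ≥ 0` (valued in `[0,∞]`) and any `ε > 0`, every `f ∈ C¹(-1,1) ∩ L²(-1,1)` satisfies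
`‖f‖_{L^∞} ≤ C ((1/ε) ‖f‖_{L²(1/ω)} + ε ‖f'‖_{L²(ω)} + ‖f‖_{L²})` for a universal
constant `C`, where the weighted norms are `‖f‖_{L²(ω)}² = ∫ |f|² ω` (interpreted as
`+∞` if not finite). -/
theorem weighted_sobolev_inequality :
    ∃ C : ℝ≥0∞, 0 < C ∧ C < ⊤ ∧
      ∀ (ω : ℝ → ℝ≥0∞), Measurable ω →
      ∀ ε : ℝ, 0 < ε →
      ∀ f : ℝ → ℂ, ContDiffOn ℝ 1 f (Ioo (-1) 1) →
      (∫⁻ x in Ioo (-1:ℝ) 1, (‖f x‖₊ : ℝ≥0∞) ^ 2) < ⊤ →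
      ∀ x ∈ Ioo (-1:ℝ) 1,
        (‖f x‖₊ : ℝ≥0∞) ≤ C *
          (ENNReal.ofReal (1 / ε) *
              (∫⁻ y in Ioo (-1:ℝ) 1, (‖f y‖₊ : ℝ≥0∞) ^ 2 / ω y) ^ (1/2 : ℝ)
            + ENNReal.ofReal ε *
              (∫⁻ y in Ioo (-1:ℝ) 1, (‖deriv f y‖₊ : ℝ≥0∞) ^ 2 * ω y) ^ (1/2 : ℝ)
            + (∫⁻ y in Ioo (-1:ℝ) 1, (‖f y‖₊ : ℝ≥0∞) ^ 2) ^ (1/2 : ℝ)) := by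
  refine ⟨4, by norm_num, by norm_num, ?_⟩
  intro ω hω ε hε f hf hK2 x hx
  have h1ε : ENNReal.ofReal (1/ε) ≠ 0 := (ENNReal.ofReal_pos.mpr (by positivity)).ne'
  have hε0 : ENNReal.ofReal ε ≠ 0 := (ENNReal.ofReal_pos.mpr hε).ne'
  by_cases hIA : (∫⁻ y in Ioo (-1:ℝ) 1, (‖f y‖₊ : ℝ≥0∞) ^ 2 / ω y) = ⊤
  · rw [hIA, ENNReal.top_rpow_of_pos (by norm_num), ENNReal.mul_top h1ε, top_add, top_add,
      ENNReal.mul_top (by norm_num)]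
    exact le_top
  by_cases hIB : (∫⁻ y in Ioo (-1:ℝ) 1, (‖deriv f y‖₊ : ℝ≥0∞) ^ 2 * ω y) = ⊤
  · rw [hIB, ENNReal.top_rpow_of_pos (by norm_num), ENNReal.mul_top hε0, add_top, top_add,
      ENNReal.mul_top (by norm_num)]
    exact le_top
  -- setup
  have hfd : ∀ t ∈ Ioo (-1:ℝ) 1, HasDerivAt f (deriv f t) t := fun t ht =>
    ((hf.differentiableOn one_ne_zero).differentiableAt (isOpen_Ioo.mem_nhds ht)).hasDerivAt
  have hcf : ContinuousOn f (Ioo (-1:ℝ) 1) := hf.continuousOn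
  have hcf' : ContinuousOn (deriv f) (Ioo (-1:ℝ) 1) :=
    hf.continuousOn_deriv_of_isOpen isOpen_Ioo le_rfl
  set g' : ℝ → ℝ := fun t => 2 * (inner ℝ (f t) (deriv f t) : ℝ) with hg'
  have hgderiv : ∀ t ∈ Ioo (-1:ℝ) 1, HasDerivAt (fun t => ‖f t‖ ^ 2) (g' t) t :=
    fun t ht => (hfd t ht).norm_sq
  have hg'bound : ∀ t, |g' t| ≤ 2 * (‖f t‖ * ‖deriv f t‖) := by
    intro t
    rw [hg', abs_mul, abs_two]
    exact mul_le_mul_of_nonneg_left (abs_real_inner_le_norm _ _) (by norm_num)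
  have hg'cont : ContinuousOn g' (Ioo (-1:ℝ) 1) :=
    continuousOn_const.mul (hcf.inner hcf')
  set M := ∫⁻ y in Ioo (-1:ℝ) 1, (‖f y‖₊ : ℝ≥0∞) * (‖deriv f y‖₊ : ℝ≥0∞) with hM
  -- pointwise bound from FTC
  have key1 : ∀ y ∈ Ioo (-1:ℝ) 1,
      ((‖f x‖₊ : ℝ≥0∞)) ^ 2 ≤ ((‖f y‖₊ : ℝ≥0∞)) ^ 2 + 2 * M := by
    intro y hy
    have hsub : uIcc y x ⊆ Ioo (-1:ℝ) 1 := Set.ordConnected_Ioo.uIcc_subset hy hx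
    have hcont : ContinuousOn g' (uIcc y x) := hg'cont.mono hsub
    have hint : IntervalIntegrable g' volume y x := hcont.intervalIntegrable
    have hftc : ∫ t in y..x, g' t = ‖f x‖ ^ 2 - ‖f y‖ ^ 2 :=
      intervalIntegral.integral_eq_sub_of_hasDerivAt (fun t ht => hgderiv t (hsub ht)) hint
    have habs : |∫ t in y..x, g' t| ≤ ∫ t in Ι y x, |g' t| := by
      simpa using intervalIntegral.norm_integral_le_integral_norm_uIoc
        (f := g') (a := y) (b := x) (μ := volume)
    have hIocsub : Ι y x ⊆ Ioo (-1:ℝ) 1 := Set.uIoc_subset_uIcc.trans hsub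
    have hInt2 : IntegrableOn (fun t => |g' t|) (Ι y x) :=
      (hcont.abs.integrableOn_compact isCompact_uIcc).mono_set Set.uIoc_subset_uIcc
    have h1 : ENNReal.ofReal (∫ t in Ι y x, |g' t|) = ∫⁻ t in Ι y x, ENNReal.ofReal |g' t| :=
      ofReal_integral_eq_lintegral_ofReal hInt2 (ae_of_all _ fun t => abs_nonneg _)
    have h2 : (∫⁻ t in Ι y x, ENNReal.ofReal |g' t|) ≤ 2 * M := by
      calc ∫⁻ t in Ι y x, ENNReal.ofReal |g' t|
          ≤ ∫⁻ t in Ioo (-1:ℝ) 1, ENNReal.ofReal |g' t| := lintegral_mono_set hIocsub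
        _ ≤ ∫⁻ t in Ioo (-1:ℝ) 1, 2 * ((‖f t‖₊ : ℝ≥0∞) * (‖deriv f t‖₊ : ℝ≥0∞)) := by
            refine lintegral_mono fun t => ?_
            calc ENNReal.ofReal |g' t| ≤ ENNReal.ofReal (2 * (‖f t‖ * ‖deriv f t‖)) :=
                  ENNReal.ofReal_le_ofReal (hg'bound t)
              _ = 2 * ((‖f t‖₊ : ℝ≥0∞) * (‖deriv f t‖₊ : ℝ≥0∞)) := by
                  rw [ENNReal.ofReal_mul (by norm_num), ENNReal.ofReal_mul (norm_nonneg _),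
                    ENNReal.ofReal_ofNat, ofReal_norm, enorm_eq_nnnorm, ofReal_norm, enorm_eq_nnnorm]
        _ = 2 * M := lintegral_const_mul' 2 _ (by norm_num)
    have hre : ‖f x‖ ^ 2 ≤ ‖f y‖ ^ 2 + |∫ t in y..x, g' t| := by
      have := le_abs_self (∫ t in y..x, g' t)
      linarith [hftc]
    calc ((‖f x‖₊ : ℝ≥0∞)) ^ 2 = ENNReal.ofReal (‖f x‖ ^ 2) := by
          rw [ENNReal.ofReal_pow (norm_nonneg _), ofReal_norm, enorm_eq_nnnorm]
      _ ≤ ENNReal.ofReal (‖f y‖ ^ 2 + |∫ t in y..x, g' t|) := ENNReal.ofReal_le_ofReal hre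
      _ ≤ ENNReal.ofReal (‖f y‖ ^ 2) + ENNReal.ofReal |∫ t in y..x, g' t| :=
          ENNReal.ofReal_add_le
      _ ≤ ((‖f y‖₊ : ℝ≥0∞)) ^ 2 + 2 * M := by
          refine add_le_add (le_of_eq ?_) ?_
          · rw [ENNReal.ofReal_pow (norm_nonneg _), ofReal_norm, enorm_eq_nnnorm]
          · exact ((ENNReal.ofReal_le_ofReal habs).trans (le_of_eq h1)).trans h2
  -- averaged bound
  have key2 : ((‖f x‖₊ : ℝ≥0∞)) ^ 2 ≤
      (∫⁻ y in Ioo (-1:ℝ) 1, (‖f y‖₊ : ℝ≥0∞) ^ 2) + 4 * M := by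
    have hμ : volume (Ioo (-1:ℝ) 1) = ENNReal.ofReal 2 := by
      rw [Real.volume_Ioo]; norm_num
    have h3 : ((‖f x‖₊ : ℝ≥0∞)) ^ 2 * volume (Ioo (-1:ℝ) 1)
        ≤ ∫⁻ y in Ioo (-1:ℝ) 1, (((‖f y‖₊ : ℝ≥0∞)) ^ 2 + 2 * M) := by
      rw [← setLIntegral_const]
      exact setLIntegral_mono' measurableSet_Ioo key1
    have h4 : (∫⁻ y in Ioo (-1:ℝ) 1, (((‖f y‖₊ : ℝ≥0∞)) ^ 2 + 2 * M))
        = (∫⁻ y in Ioo (-1:ℝ) 1, (‖f y‖₊ : ℝ≥0∞) ^ 2) + 2 * M * volume (Ioo (-1:ℝ) 1) := by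
      rw [lintegral_add_right _ measurable_const, setLIntegral_const]
    calc ((‖f x‖₊ : ℝ≥0∞)) ^ 2 ≤ ((‖f x‖₊ : ℝ≥0∞)) ^ 2 * volume (Ioo (-1:ℝ) 1) := by
          rw [hμ]
          exact le_mul_of_one_le_right zero_le (ENNReal.one_le_ofReal.mpr one_le_two)
      _ ≤ (∫⁻ y in Ioo (-1:ℝ) 1, (‖f y‖₊ : ℝ≥0∞) ^ 2) + 2 * M * volume (Ioo (-1:ℝ) 1) :=
          h3.trans_eq h4
      _ = (∫⁻ y in Ioo (-1:ℝ) 1, (‖f y‖₊ : ℝ≥0∞) ^ 2) + 4 * M := by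
          rw [hμ, ENNReal.ofReal_ofNat]
          ring_nf
  -- Cauchy–Schwarz
  have haef : AEMeasurable f (volume.restrict (Ioo (-1:ℝ) 1)) :=
    hcf.aemeasurable measurableSet_Ioo
  have haef' : AEMeasurable (deriv f) (volume.restrict (Ioo (-1:ℝ) 1)) :=
    hcf'.aemeasurable measurableSet_Ioo
  have hmA : AEMeasurable (fun y => (‖f y‖₊ : ℝ≥0∞) ^ 2 / ω y)
      (volume.restrict (Ioo (-1:ℝ) 1)) := (haef.enorm.pow_const 2).div hω.aemeasurable
  have hmB : AEMeasurable (fun y => (‖deriv f y‖₊ : ℝ≥0∞) ^ 2 * ω y)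
      (volume.restrict (Ioo (-1:ℝ) 1)) := (haef'.enorm.pow_const 2).mul hω.aemeasurable
  have haeA := ae_lt_top' hmA hIA
  have haeB := ae_lt_top' hmB hIB
  have hCS : M ≤ (∫⁻ y in Ioo (-1:ℝ) 1, (‖f y‖₊ : ℝ≥0∞) ^ 2 / ω y) ^ (1/2 : ℝ) *
      (∫⁻ y in Ioo (-1:ℝ) 1, (‖deriv f y‖₊ : ℝ≥0∞) ^ 2 * ω y) ^ (1/2 : ℝ) := by
    have hpt : ∀ᵐ y ∂(volume.restrict (Ioo (-1:ℝ) 1)),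
        (‖f y‖₊ : ℝ≥0∞) * (‖deriv f y‖₊ : ℝ≥0∞) ≤
          ((fun y => ((‖f y‖₊ : ℝ≥0∞) ^ 2 / ω y) ^ (1/2 : ℝ)) *
           (fun y => ((‖deriv f y‖₊ : ℝ≥0∞) ^ 2 * ω y) ^ (1/2 : ℝ))) y := by
      filter_upwards [haeA, haeB] with y hA' hB'
      simp only [Pi.mul_apply]
      by_cases h0 : ω y = 0
      · rcases eq_or_ne ((‖f y‖₊ : ℝ≥0∞) ^ 2) 0 with h | h
        · have : (‖f y‖₊ : ℝ≥0∞) = 0 := by simpa using h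
          rw [this, zero_mul]; exact zero_le
        · rw [h0, ENNReal.div_zero h] at hA'
          exact absurd hA' (lt_irrefl ⊤)
      by_cases htop : ω y = ⊤
      · rcases eq_or_ne ((‖deriv f y‖₊ : ℝ≥0∞) ^ 2) 0 with h | h
        · have : (‖deriv f y‖₊ : ℝ≥0∞) = 0 := by simpa using h
          rw [this, mul_zero]; exact zero_le
        · rw [htop, ENNReal.mul_top h] at hB'
          exact absurd hB' (lt_irrefl ⊤)
      · have hc : ((‖f y‖₊ : ℝ≥0∞) ^ 2 / ω y) * ((‖deriv f y‖₊ : ℝ≥0∞) ^ 2 * ω y)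
            = ((‖f y‖₊ : ℝ≥0∞) * (‖deriv f y‖₊ : ℝ≥0∞)) ^ 2 := by
          rw [div_eq_mul_inv]
          calc (‖f y‖₊ : ℝ≥0∞) ^ 2 * (ω y)⁻¹ * ((‖deriv f y‖₊ : ℝ≥0∞) ^ 2 * ω y)
              = (‖f y‖₊ : ℝ≥0∞) ^ 2 * (‖deriv f y‖₊ : ℝ≥0∞) ^ 2 * ((ω y)⁻¹ * ω y) := by ring
            _ = (‖f y‖₊ : ℝ≥0∞) ^ 2 * (‖deriv f y‖₊ : ℝ≥0∞) ^ 2 := by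
                rw [ENNReal.inv_mul_cancel h0 htop, mul_one]
            _ = ((‖f y‖₊ : ℝ≥0∞) * (‖deriv f y‖₊ : ℝ≥0∞)) ^ 2 := (mul_pow _ _ 2).symm
        rw [← ENNReal.mul_rpow_of_nonneg _ _ (by norm_num : (0:ℝ) ≤ 1/2), hc, rpow_half_sq']
    calc M ≤ ∫⁻ y in Ioo (-1:ℝ) 1,
          ((fun y => ((‖f y‖₊ : ℝ≥0∞) ^ 2 / ω y) ^ (1/2 : ℝ)) *
           (fun y => ((‖deriv f y‖₊ : ℝ≥0∞) ^ 2 * ω y) ^ (1/2 : ℝ))) y :=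
        lintegral_mono_ae hpt
      _ ≤ (∫⁻ y in Ioo (-1:ℝ) 1, (((‖f y‖₊ : ℝ≥0∞) ^ 2 / ω y) ^ (1/2 : ℝ)) ^ (2:ℝ)) ^ (1/(2:ℝ)) *
          (∫⁻ y in Ioo (-1:ℝ) 1, (((‖deriv f y‖₊ : ℝ≥0∞) ^ 2 * ω y) ^ (1/2 : ℝ)) ^ (2:ℝ)) ^ (1/(2:ℝ)) :=
        ENNReal.lintegral_mul_le_Lp_mul_Lq _ Real.HolderConjugate.two_two
          (hmA.pow aemeasurable_const) (hmB.pow aemeasurable_const)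
      _ = (∫⁻ y in Ioo (-1:ℝ) 1, (‖f y‖₊ : ℝ≥0∞) ^ 2 / ω y) ^ (1/2 : ℝ) *
          (∫⁻ y in Ioo (-1:ℝ) 1, (‖deriv f y‖₊ : ℝ≥0∞) ^ 2 * ω y) ^ (1/2 : ℝ) := by
          congr 1
          · congr 1
            refine lintegral_congr fun y => ?_
            rw [← ENNReal.rpow_mul]; norm_num
          · congr 1
            refine lintegral_congr fun y => ?_
            rw [← ENNReal.rpow_mul]; norm_num
  -- assemble
  have hAB : (∫⁻ y in Ioo (-1:ℝ) 1, (‖f y‖₊ : ℝ≥0∞) ^ 2 / ω y) ^ (1/2 : ℝ) *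
      (∫⁻ y in Ioo (-1:ℝ) 1, (‖deriv f y‖₊ : ℝ≥0∞) ^ 2 * ω y) ^ (1/2 : ℝ)
      = (ENNReal.ofReal (1/ε) * (∫⁻ y in Ioo (-1:ℝ) 1, (‖f y‖₊ : ℝ≥0∞) ^ 2 / ω y) ^ (1/2 : ℝ)) *
        (ENNReal.ofReal ε * (∫⁻ y in Ioo (-1:ℝ) 1, (‖deriv f y‖₊ : ℝ≥0∞) ^ 2 * ω y) ^ (1/2 : ℝ)) := by
    rw [mul_mul_mul_comm, ← ENNReal.ofReal_mul (by positivity),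
      show (1/ε)*ε = 1 by field_simp, ENNReal.ofReal_one, one_mul]
  calc (‖f x‖₊ : ℝ≥0∞) = (((‖f x‖₊ : ℝ≥0∞)) ^ 2) ^ (1/2 : ℝ) := (rpow_half_sq' _).symm
    _ ≤ ((∫⁻ y in Ioo (-1:ℝ) 1, (‖f y‖₊ : ℝ≥0∞) ^ 2) + 4 * M) ^ (1/2 : ℝ) :=
        ENNReal.rpow_le_rpow key2 (by norm_num)
    _ ≤ (∫⁻ y in Ioo (-1:ℝ) 1, (‖f y‖₊ : ℝ≥0∞) ^ 2) ^ (1/2 : ℝ) + (4 * M) ^ (1/2 : ℝ) :=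
        ENNReal.rpow_add_le_add_rpow _ _ (by norm_num) (by norm_num)
    _ = (∫⁻ y in Ioo (-1:ℝ) 1, (‖f y‖₊ : ℝ≥0∞) ^ 2) ^ (1/2 : ℝ) + 2 * M ^ (1/2 : ℝ) := by
        rw [ENNReal.mul_rpow_of_nonneg _ _ (by norm_num : (0:ℝ) ≤ 1/2)]
        congr 2
        rw [show (4:ℝ≥0∞) = 2^2 by norm_num, rpow_half_sq']
    _ ≤ (∫⁻ y in Ioo (-1:ℝ) 1, (‖f y‖₊ : ℝ≥0∞) ^ 2) ^ (1/2 : ℝ) +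
        2 * ((∫⁻ y in Ioo (-1:ℝ) 1, (‖f y‖₊ : ℝ≥0∞) ^ 2 / ω y) ^ (1/2 : ℝ) *
          (∫⁻ y in Ioo (-1:ℝ) 1, (‖deriv f y‖₊ : ℝ≥0∞) ^ 2 * ω y) ^ (1/2 : ℝ)) ^ (1/2 : ℝ) := by
        gcongr
    _ ≤ (∫⁻ y in Ioo (-1:ℝ) 1, (‖f y‖₊ : ℝ≥0∞) ^ 2) ^ (1/2 : ℝ) +
        2 * (ENNReal.ofReal (1/ε) * (∫⁻ y in Ioo (-1:ℝ) 1, (‖f y‖₊ : ℝ≥0∞) ^ 2 / ω y) ^ (1/2 : ℝ) +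
          ENNReal.ofReal ε * (∫⁻ y in Ioo (-1:ℝ) 1, (‖deriv f y‖₊ : ℝ≥0∞) ^ 2 * ω y) ^ (1/2 : ℝ)) := by
        gcongr
        rw [hAB]
        exact sqrt_mul_le_add' _ _
    _ ≤ 4 * (ENNReal.ofReal (1/ε) * (∫⁻ y in Ioo (-1:ℝ) 1, (‖f y‖₊ : ℝ≥0∞) ^ 2 / ω y) ^ (1/2 : ℝ) +
          ENNReal.ofReal ε * (∫⁻ y in Ioo (-1:ℝ) 1, (‖deriv f y‖₊ : ℝ≥0∞) ^ 2 * ω y) ^ (1/2 : ℝ) +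
          (∫⁻ y in Ioo (-1:ℝ) 1, (‖f y‖₊ : ℝ≥0∞) ^ 2) ^ (1/2 : ℝ)) := by
        refine le_trans (add_le_add
          (le_mul_of_one_le_left zero_le (by norm_num : (1:ℝ≥0∞) ≤ 4))
          (mul_le_mul_left (by norm_num : (2:ℝ≥0∞) ≤ 4) _)) (le_of_eq ?_)
        ring
end

section
/- If additionally the mean of f² over [-1,1] is zero, then ‖f‖_{L^∞} ≤ C( (1/ε)‖f‖_{L²(1/ω)} + ε‖f'‖_{L²(ω)} ) for all ε > 0 and all weights ω ≥ 0, with universal C. -/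
open MeasureTheory Set ENNReal NNReal

lemma amgm_ennreal (a b : ℝ≥0) (w : ℝ≥0∞) :
    2 * (a : ℝ≥0∞) * b ≤ (a : ℝ≥0∞) ^ 2 / w + (b : ℝ≥0∞) ^ 2 * w := by
  rcases eq_or_ne w ⊤ with rfl | hwt
  · rcases eq_or_ne b 0 with rfl | hb
    · simp
    · have h : (b : ℝ≥0∞) ^ 2 * ⊤ = ⊤ := by
        rw [ENNReal.mul_top]
        positivity
      simp [h]
  rcases eq_or_ne w 0 with rfl | hw0
  · rcases eq_or_ne a 0 with rfl | ha
    · simp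
    · have h : (a : ℝ≥0∞) ^ 2 / 0 = ⊤ := by
        rw [ENNReal.div_zero]
        positivity
      simp [h]
  lift w to ℝ≥0 using hwt
  have hw0' : w ≠ 0 := by simpa using hw0
  have key : 2 * a * b ≤ a ^ 2 / w + b ^ 2 * w := by
    have hv : (0:ℝ) < w := lt_of_le_of_ne (w.coe_nonneg) (by exact_mod_cast (Ne.symm hw0'))
    rw [← NNReal.coe_le_coe]
    push_cast
    have heq : (a:ℝ) ^ 2 / w + b ^ 2 * w = ((a:ℝ) ^ 2 + b ^ 2 * w ^ 2) / w := by
      field_simp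
    rw [heq, le_div_iff₀ hv]
    nlinarith [sq_nonneg ((a:ℝ) - b * w)]
  calc 2 * (a : ℝ≥0∞) * b = ((2 * a * b : ℝ≥0) : ℝ≥0∞) := by push_cast; ring
    _ ≤ ((a ^ 2 / w + b ^ 2 * w : ℝ≥0) : ℝ≥0∞) := by exact_mod_cast key
    _ = (a : ℝ≥0∞) ^ 2 / w + (b : ℝ≥0∞) ^ 2 * w := by
        push_cast [ENNReal.coe_div hw0']
        ring_nf

lemma sqrt_half_mul (e X : ℝ≥0∞) (_he0 : e ≠ 0) (_het : e ≠ ⊤) :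
    (e * e * X) ^ (1/2 : ℝ) = e * X ^ (1/2 : ℝ) := by
  rw [ENNReal.mul_rpow_of_nonneg _ _ (by norm_num : (0:ℝ) ≤ 1/2),
    ENNReal.mul_rpow_of_nonneg _ _ (by norm_num : (0:ℝ) ≤ 1/2),
    ← ENNReal.rpow_add_of_nonneg _ _ (by norm_num) (by norm_num)]
  norm_num

/-- Weighted Sobolev inequality with zero-mean square: if moreover the mean of `f²`
over `[-1,1]` vanishes (`f` complex-valued, `f²` meaning the square, not `|f|²`), then
`‖f‖_{L^∞} ≤ C ((1/ε) ‖f‖_{L²(1/ω)} + ε ‖f'‖_{L²(ω)})` for all `ε > 0` and all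
weights `ω ≥ 0`, with a universal constant `C`. -/
theorem weighted_sobolev_inequality_mean_zero :
    ∃ C : ℝ≥0∞, 0 < C ∧ C < ⊤ ∧
      ∀ (ω : ℝ → ℝ≥0∞), Measurable ω →
      ∀ ε : ℝ, 0 < ε →
      ∀ f : ℝ → ℂ, ContDiffOn ℝ 1 f (Ioo (-1) 1) →
      (∫⁻ x in Ioo (-1:ℝ) 1, (‖f x‖₊ : ℝ≥0∞) ^ 2) < ⊤ →
      (∫ x in Ioc (-1:ℝ) 1, (f x) ^ 2) = 0 →
      ∀ x ∈ Ioo (-1:ℝ) 1,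
        (‖f x‖₊ : ℝ≥0∞) ≤ C *
          (ENNReal.ofReal (1 / ε) *
              (∫⁻ y in Ioo (-1:ℝ) 1, (‖f y‖₊ : ℝ≥0∞) ^ 2 / ω y) ^ (1/2 : ℝ)
            + ENNReal.ofReal ε *
              (∫⁻ y in Ioo (-1:ℝ) 1, (‖deriv f y‖₊ : ℝ≥0∞) ^ 2 * ω y) ^ (1/2 : ℝ)) := by
  refine ⟨1, zero_lt_one, one_lt_top, ?_⟩
  intro ω hω ε hε f hf hL2 hmean x hx
  rw [one_mul]
  set A := ∫⁻ y in Ioo (-1:ℝ) 1, (‖f y‖₊ : ℝ≥0∞) ^ 2 / ω y with hA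
  set B := ∫⁻ y in Ioo (-1:ℝ) 1, (‖deriv f y‖₊ : ℝ≥0∞) ^ 2 * ω y with hB
  have hε' : (0:ℝ) < 1 / ε := by positivity
  by_cases hAtop : A = ⊤
  · have h1 : ENNReal.ofReal (1/ε) * A ^ (1/2:ℝ) = ⊤ := by
      rw [hAtop, ENNReal.top_rpow_of_pos (by norm_num), ENNReal.mul_top
        (by simpa using (ENNReal.ofReal_pos.2 hε').ne')]
    rw [h1, top_add]
    exact le_top
  by_cases hBtop : B = ⊤
  · have h1 : ENNReal.ofReal ε * B ^ (1/2:ℝ) = ⊤ := by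
      rw [hBtop, ENNReal.top_rpow_of_pos (by norm_num), ENNReal.mul_top
        (by simpa using (ENNReal.ofReal_pos.2 hε).ne')]
    rw [h1, add_top]
    exact le_top
  -- main case
  set e := ENNReal.ofReal ε with he
  have he0 : e ≠ 0 := (ENNReal.ofReal_pos.2 hε).ne'
  have het : e ≠ ⊤ := ENNReal.ofReal_ne_top
  have hi0 : e⁻¹ ≠ 0 := ENNReal.inv_ne_zero.2 het
  have hit : e⁻¹ ≠ ⊤ := ENNReal.inv_ne_top.2 he0
  -- pointwise AM-GM with weight e*e*ω
  have hpt : ∀ y, 2 * (‖f y‖₊ : ℝ≥0∞) * ‖deriv f y‖₊ ≤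
      e⁻¹ * e⁻¹ * ((‖f y‖₊ : ℝ≥0∞) ^ 2 / ω y) + e * e * ((‖deriv f y‖₊ : ℝ≥0∞) ^ 2 * ω y) := by
    intro y
    have h := amgm_ennreal (‖f y‖₊) (‖deriv f y‖₊) (e * e * ω y)
    refine h.trans (le_of_eq ?_)
    have hdiv : (‖f y‖₊ : ℝ≥0∞) ^ 2 / (e * e * ω y) = e⁻¹ * e⁻¹ * ((‖f y‖₊ : ℝ≥0∞) ^ 2 / ω y) := by
      rw [div_eq_mul_inv, div_eq_mul_inv, ENNReal.mul_inv (Or.inl (mul_ne_zero he0 he0))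
        (Or.inl (ENNReal.mul_ne_top het het)), ENNReal.mul_inv (Or.inl he0) (Or.inl het)]
      ring
    rw [hdiv]
    ring
  -- S = lintegral of 2|f||f'|
  set S := ∫⁻ y in Ioo (-1:ℝ) 1, 2 * (‖f y‖₊ : ℝ≥0∞) * ‖deriv f y‖₊ with hS
  have hmeasB : Measurable fun y => e * e * ((‖deriv f y‖₊ : ℝ≥0∞) ^ 2 * ω y) :=
    (((measurable_deriv f).nnnorm.coe_nnreal_ennreal.pow_const 2).mul hω).const_mul _
  have hSle : S ≤ e⁻¹ * e⁻¹ * A + e * e * B := by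
    calc S ≤ ∫⁻ y in Ioo (-1:ℝ) 1,
        (e⁻¹ * e⁻¹ * ((‖f y‖₊ : ℝ≥0∞) ^ 2 / ω y) + e * e * ((‖deriv f y‖₊ : ℝ≥0∞) ^ 2 * ω y)) :=
        lintegral_mono fun y => hpt y
      _ = (∫⁻ y in Ioo (-1:ℝ) 1, e⁻¹ * e⁻¹ * ((‖f y‖₊ : ℝ≥0∞) ^ 2 / ω y))
          + ∫⁻ y in Ioo (-1:ℝ) 1, e * e * ((‖deriv f y‖₊ : ℝ≥0∞) ^ 2 * ω y) :=
        lintegral_add_right' _ hmeasB.aemeasurable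
      _ = e⁻¹ * e⁻¹ * A + e * e * B := by
        rw [lintegral_const_mul' _ _ (ENNReal.mul_ne_top hit hit),
          lintegral_const_mul' _ _ (ENNReal.mul_ne_top het het)]
  have hSfin : S < ⊤ := lt_of_le_of_lt hSle (by
    exact ENNReal.add_lt_top.2 ⟨ENNReal.mul_lt_top (ENNReal.mul_ne_top hit hit).lt_top
      (lt_top_iff_ne_top.2 hAtop), ENNReal.mul_lt_top (ENNReal.mul_ne_top het het).lt_top
      (lt_top_iff_ne_top.2 hBtop)⟩)
  -- define c
  set c : ℝ → ℂ := fun y => 2 * f y * deriv f y with hc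
  have hc_nn : ∀ y, (‖c y‖₊ : ℝ≥0∞) = 2 * (‖f y‖₊ : ℝ≥0∞) * ‖deriv f y‖₊ := by
    intro y
    simp only [hc, nnnorm_mul]
    push_cast
    norm_num
  have hf_cont : ContinuousOn f (Ioo (-1:ℝ) 1) := hf.continuousOn
  have hf_aesm : AEStronglyMeasurable f (volume.restrict (Ioo (-1:ℝ) 1)) :=
    hf_cont.aestronglyMeasurable measurableSet_Ioo
  have hc_int : IntegrableOn c (Ioo (-1:ℝ) 1) volume := by
    constructor
    · exact (aestronglyMeasurable_const.mul hf_aesm).mul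
        (stronglyMeasurable_deriv f).aestronglyMeasurable.restrict
    · simpa only [HasFiniteIntegral, enorm_eq_nnnorm, hc_nn] using hSfin
  set M := ∫ y in Ioo (-1:ℝ) 1, ‖c y‖ with hM
  -- derivative of g = f^2
  set g : ℝ → ℂ := fun y => f y ^ 2 with hg
  have hgd : ∀ y ∈ Ioo (-1:ℝ) 1, HasDerivAt g (c y) y := by
    intro y hy
    have hd : DifferentiableAt ℝ f y :=
      (hf.differentiableOn one_ne_zero).differentiableAt (isOpen_Ioo.mem_nhds hy)
    have hder := hd.hasDerivAt
    have h2 : HasDerivAt (fun y => f y * f y) (deriv f y * f y + f y * deriv f y) y :=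
      hder.mul hder
    have h3 : HasDerivAt g (deriv f y * f y + f y * deriv f y) y := by
      simpa only [hg, pow_two] using h2
    convert h3 using 1
    simp only [hc]
    ring
  -- bound on increments
  have hbound : ∀ y ∈ Ioo (-1:ℝ) 1, ‖g x - g y‖ ≤ M := by
    intro y hy
    have hsub : uIcc y x ⊆ Ioo (-1:ℝ) 1 := (ordConnected_Ioo).uIcc_subset hy hx
    have hii : IntervalIntegrable c volume y x :=
      (hc_int.mono_set hsub).intervalIntegrable
    have hftc : ∫ t in y..x, c t = g x - g y :=
      intervalIntegral.integral_eq_sub_of_hasDerivAt (fun t ht => hgd t (hsub ht)) hii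
    rw [← hftc]
    refine (intervalIntegral.norm_integral_le_integral_norm_uIoc).trans ?_
    apply setIntegral_mono_set hc_int.norm
    · filter_upwards with t using norm_nonneg _
    · filter_upwards with t ht
      exact hsub ((uIoc_subset_uIcc : Set.uIoc y x ⊆ uIcc y x) ht)
  -- rewrite Ioc restrict to Ioo
  have hrestr : volume.restrict (Ioc (-1:ℝ) 1) = volume.restrict (Ioo (-1:ℝ) 1) :=
    (Measure.restrict_congr_set Ioo_ae_eq_Ioc).symm
  have hmean' : (∫ y in Ioo (-1:ℝ) 1, g y) = 0 := by
    rw [← hmean]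
    exact (congrArg (fun μ => ∫ y, g y ∂μ) hrestr).symm
  have hg_int : IntegrableOn g (Ioo (-1:ℝ) 1) volume := by
    constructor
    · exact hf_aesm.mul hf_aesm |>.congr (by filter_upwards with y; simp [hg, sq])
    · have hnn : ∀ y, (‖g y‖₊ : ℝ≥0∞) = (‖f y‖₊ : ℝ≥0∞) ^ 2 := by
        intro y; simp [hg, nnnorm_pow]
      simpa only [HasFiniteIntegral, enorm_eq_nnnorm, hnn] using hL2
  have hvol : volume (Ioo (-1:ℝ) 1) = ENNReal.ofReal 2 := by
    rw [Real.volume_Ioo]; norm_num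
  have hvol_fin : volume (Ioo (-1:ℝ) 1) ≠ ⊤ := by rw [hvol]; exact ENNReal.ofReal_ne_top
  -- mean-zero trick
  have hsplit : (∫ y in Ioo (-1:ℝ) 1, (g x - g y)) = (2:ℝ) • g x := by
    rw [integral_sub (integrableOn_const (C := g x) hvol_fin enorm_ne_top) hg_int,
      hmean', sub_zero, setIntegral_const, measureReal_def, hvol, ENNReal.toReal_ofReal (by norm_num)]
  have hMnonneg : (0:ℝ) ≤ M := integral_nonneg fun y => norm_nonneg _
  have hgxM : ‖g x‖ ≤ M := by
    have h1 : ‖∫ y in Ioo (-1:ℝ) 1, (g x - g y)‖ ≤ ∫ y in Ioo (-1:ℝ) 1, M := by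
      refine norm_integral_le_of_norm_le (integrableOn_const hvol_fin enorm_ne_top) ?_
      filter_upwards [ae_restrict_mem measurableSet_Ioo] with y hy
      exact hbound y hy
    rw [hsplit] at h1
    have h2 : (∫ _ in Ioo (-1:ℝ) 1, M) = 2 * M := by
      rw [setIntegral_const, measureReal_def, hvol, ENNReal.toReal_ofReal (by norm_num), smul_eq_mul]
    rw [h2] at h1
    have h3 : ‖(2:ℝ) • g x‖ = 2 * ‖g x‖ := by
      rw [norm_smul]; norm_num
    rw [h3] at h1
    linarith
  -- pass to ENNReal
  have hkey : (‖f x‖₊ : ℝ≥0∞) ^ 2 ≤ e⁻¹ * e⁻¹ * A + e * e * B := by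
    have h1 : (‖f x‖₊ : ℝ≥0∞) ^ 2 = ENNReal.ofReal ‖g x‖ := by
      rw [hg]
      simp only [norm_pow]
      rw [ENNReal.ofReal_pow (norm_nonneg _), ofReal_norm, enorm_eq_nnnorm]
    have h2 : ENNReal.ofReal M = S := by
      rw [hM, ofReal_integral_norm_eq_lintegral_enorm hc_int]
      simp only [enorm_eq_nnnorm, hc_nn, hS]
    calc (‖f x‖₊ : ℝ≥0∞) ^ 2 = ENNReal.ofReal ‖g x‖ := h1
      _ ≤ ENNReal.ofReal M := ENNReal.ofReal_le_ofReal hgxM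
      _ = S := h2
      _ ≤ _ := hSle
  -- take square roots
  have hroot : (‖f x‖₊ : ℝ≥0∞) ≤ (e⁻¹ * e⁻¹ * A + e * e * B) ^ (1/2 : ℝ) := by
    have h1 : (‖f x‖₊ : ℝ≥0∞) = ((‖f x‖₊ : ℝ≥0∞) ^ 2) ^ (1/2 : ℝ) := by
      rw [← ENNReal.rpow_natCast _ 2, ← ENNReal.rpow_mul]
      norm_num
    rw [h1]
    exact ENNReal.rpow_le_rpow hkey (by norm_num)
  refine hroot.trans ?_
  calc (e⁻¹ * e⁻¹ * A + e * e * B) ^ (1/2 : ℝ)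
      ≤ (e⁻¹ * e⁻¹ * A) ^ (1/2 : ℝ) + (e * e * B) ^ (1/2 : ℝ) :=
        ENNReal.rpow_add_le_add_rpow _ _ (by norm_num) (by norm_num)
    _ = e⁻¹ * A ^ (1/2 : ℝ) + e * B ^ (1/2 : ℝ) := by
        rw [sqrt_half_mul _ _ hi0 hit, sqrt_half_mul _ _ he0 het]
    _ = ENNReal.ofReal (1/ε) * A ^ (1/2 : ℝ) + e * B ^ (1/2 : ℝ) := by
        have hinv : ENNReal.ofReal (1/ε) = e⁻¹ := by
          rw [one_div, ENNReal.ofReal_inv_of_pos hε]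
        rw [hinv]
end

section
/- The estimate ‖[f,ℍ]g‖_{L²} ≤ C‖f‖_{Ḣ^{1/2}}‖g‖_{L²} holds with universal constant C. -/
open MeasureTheory Set Filter
open scoped ENNReal

set_option maxHeartbeats 1000000

private lemma abs_cot_le (θ : ℝ) : |Real.cot θ| ≤ 1 / |Real.sin θ| := by
  rcases eq_or_ne (Real.sin θ) 0 with h | h
  · simp [Real.cot_eq_cos_div_sin, h]
  · rw [Real.cot_eq_cos_div_sin, abs_div]
    exact div_le_div_of_nonneg_right (Real.abs_cos_le_one θ) (abs_pos.mpr h).le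

/-- The estimate `‖[f,ℍ]g‖_{L²} ≤ C ‖f‖_{Ḣ^{1/2}} ‖g‖_{L²}` with a universal constant
`C`, where `[f,ℍ]g(α') = (1/2i) ∫ (f(α')-f(β')) cot(π/2(α'-β')) g(β') dβ'` and
`‖f‖_{Ḣ^{1/2}}² = (π/8) ∬ |f(α')-f(β')|²/sin²(π/2(α'-β')) dα' dβ'`,
for `f ∈ Ḣ^{1/2}([-1,1])` periodic (`f 1 = f (-1)`) and `g ∈ L²([-1,1])`. -/
theorem commutator_L2_halfnorm_estimate :
    ∃ C : ℝ, 0 < C ∧ ∀ (f g : ℝ → ℂ),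
      Measurable f → Measurable g →
      f 1 = f (-1) →
      IntegrableOn
        (fun q : ℝ × ℝ =>
          ‖f q.1 - f q.2‖ ^ 2 / (Real.sin (Real.pi / 2 * (q.1 - q.2))) ^ 2)
        (Set.Ioc (-1:ℝ) 1 ×ˢ Set.Ioc (-1:ℝ) 1) →
      IntegrableOn (fun x => ‖g x‖ ^ 2) (Ioc (-1) 1) →
      Real.sqrt (∫ α in Ioc (-1:ℝ) 1,
          ‖(1 / (2 * Complex.I)) * ∫ β in Ioc (-1:ℝ) 1,
              (f α - f β) * (Real.cot (Real.pi / 2 * (α - β)) : ℂ) * g β‖ ^ 2) ≤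
        C * Real.sqrt (Real.pi / 8 *
            ∫ x in Ioc (-1:ℝ) 1, ∫ y in Ioc (-1:ℝ) 1,
              ‖f x - f y‖ ^ 2 / (Real.sin (Real.pi / 2 * (x - y))) ^ 2) *
          Real.sqrt (∫ x in Ioc (-1:ℝ) 1, ‖g x‖ ^ 2) := by
  refine ⟨1, one_pos, fun f g hf hg _ h2d hgL2 => ?_⟩
  set μ : Measure ℝ := volume.restrict (Ioc (-1:ℝ) 1) with hμ
  -- the L² mass of g
  set G : ℝ := ∫ x in Ioc (-1:ℝ) 1, ‖g x‖ ^ 2 with hG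
  have hGnn : 0 ≤ G := integral_nonneg fun x => sq_nonneg _
  -- double-integral kernel
  set K : ℝ → ℝ := fun α => ∫ β in Ioc (-1:ℝ) 1,
      ‖f α - f β‖ ^ 2 / (Real.sin (Real.pi / 2 * (α - β))) ^ 2 with hK
  have hKnn : ∀ α, 0 ≤ K α := fun α =>
    integral_nonneg fun β => div_nonneg (sq_nonneg _) (sq_nonneg _)
  -- product integrability w.r.t. μ.prod μ
  have hprod : Integrable
      (fun q : ℝ × ℝ => ‖f q.1 - f q.2‖ ^ 2 / (Real.sin (Real.pi / 2 * (q.1 - q.2))) ^ 2)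
      (μ.prod μ) := by
    rw [hμ, Measure.prod_restrict]
    exact h2d
  have hKint : Integrable K μ := hprod.integral_prod_left
  have hae : ∀ᵐ α ∂μ, Integrable
      (fun β => ‖f α - f β‖ ^ 2 / (Real.sin (Real.pi / 2 * (α - β))) ^ 2) μ :=
    hprod.prod_right_ae
  have hgsq : Integrable (fun x => ‖g x‖ ^ 2) μ := hgL2
  -- pointwise bound, for a.e. α
  have key : ∀ᵐ α ∂μ,
      ‖(1 / (2 * Complex.I)) * ∫ β in Ioc (-1:ℝ) 1,
          (f α - f β) * (Real.cot (Real.pi / 2 * (α - β)) : ℂ) * g β‖ ^ 2 ≤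
        ((1/4) * G) * K α := by
    filter_upwards [hae] with α hint
    set A : ℝ → ℝ := fun β => ‖f α - f β‖ / |Real.sin (Real.pi / 2 * (α - β))| with hA
    have hAnn : ∀ β, 0 ≤ A β := fun β => div_nonneg (norm_nonneg _) (abs_nonneg _)
    have hAsq : ∀ β, A β ^ 2 = ‖f α - f β‖ ^ 2 / (Real.sin (Real.pi / 2 * (α - β))) ^ 2 := by
      intro β
      rw [hA, div_pow, sq_abs]
    have hAm : Measurable A := by
      apply Measurable.div
      · exact (measurable_const.sub hf).norm
      · exact (Real.measurable_sin.comp ((measurable_const.sub measurable_id).const_mul _)).abs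
    have hA2 : MemLp A 2 μ := by
      rw [memLp_two_iff_integrable_sq hAm.aestronglyMeasurable]
      exact hint.congr (Eventually.of_forall fun β => (hAsq β).symm)
    have hv2 : MemLp (fun β => ‖g β‖) 2 μ := by
      rw [memLp_two_iff_integrable_sq hg.norm.aestronglyMeasurable]
      exact hgsq
    have hABint : Integrable (fun β => A β * ‖g β‖) μ := by
      have h111 : (1:ℝ≥0∞)/1 = 1/2 + 1/2 := by rw [ENNReal.add_halves]; norm_num
      have h' : MemLp (A • (fun β => ‖g β‖)) 1 μ :=
        haveI : ENNReal.HolderTriple 2 2 1 :=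
          ENNReal.holderConjugate_iff.mpr ENNReal.inv_two_add_inv_two
        hv2.smul hA2
      have h'' : Integrable (A • (fun β => ‖g β‖)) μ := memLp_one_iff_integrable.mp h'
      exact h''.congr (Eventually.of_forall fun β => by simp [Pi.smul_apply, smul_eq_mul])
    -- step 1 : norm of the integral
    have step1 : ‖∫ β in Ioc (-1:ℝ) 1,
        (f α - f β) * (Real.cot (Real.pi / 2 * (α - β)) : ℂ) * g β‖ ≤
        ∫ β in Ioc (-1:ℝ) 1, A β * ‖g β‖ := by
      refine (norm_integral_le_integral_norm _).trans ?_
      refine integral_mono_of_nonneg (Eventually.of_forall fun β => norm_nonneg _) hABint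
        (Eventually.of_forall fun β => ?_)
      dsimp only
      have h1 : ‖(f α - f β) * (Real.cot (Real.pi / 2 * (α - β)) : ℂ) * g β‖ =
          ‖f α - f β‖ * |Real.cot (Real.pi / 2 * (α - β))| * ‖g β‖ := by
        rw [norm_mul, norm_mul, Complex.norm_real, Real.norm_eq_abs]
      rw [h1]
      have h2 : ‖f α - f β‖ * |Real.cot (Real.pi / 2 * (α - β))| ≤ A β := by
        rw [hA]
        calc ‖f α - f β‖ * |Real.cot (Real.pi / 2 * (α - β))| ≤
            ‖f α - f β‖ * (1 / |Real.sin (Real.pi / 2 * (α - β))|) :=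
              mul_le_mul_of_nonneg_left (abs_cot_le _) (norm_nonneg _)
          _ = ‖f α - f β‖ / |Real.sin (Real.pi / 2 * (α - β))| := by ring
      exact mul_le_mul_of_nonneg_right h2 (norm_nonneg _)
    -- step 2 : Cauchy-Schwarz
    have h22 : (2:ℝ).HolderConjugate 2 := ⟨by norm_num, by norm_num, by norm_num⟩
    have hofReal : ENNReal.ofReal (2:ℝ) = 2 := by norm_num
    have step2 : (∫ β in Ioc (-1:ℝ) 1, A β * ‖g β‖) ≤ Real.sqrt (K α) * Real.sqrt G := by
      have hcs := integral_mul_le_Lp_mul_Lq_of_nonneg (μ := μ) h22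
        (Eventually.of_forall hAnn) (Eventually.of_forall fun β => norm_nonneg (g β))
        (hofReal ▸ hA2) (hofReal ▸ hv2)
      have hrw : ∀ x : ℝ, x ^ (2:ℝ) = x ^ (2:ℕ) := by
        intro x
        rw [show (2:ℝ) = ((2:ℕ):ℝ) by norm_num, Real.rpow_natCast]
      have e1 : (∫ β, A β ^ (2:ℝ) ∂μ) = K α := by
        rw [hK]
        refine integral_congr_ae (Eventually.of_forall fun β => ?_)
        dsimp only
        rw [hrw, hAsq β]
      have e2 : (∫ β, ‖g β‖ ^ (2:ℝ) ∂μ) = G := by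
        rw [hG]
        refine integral_congr_ae (Eventually.of_forall fun β => ?_)
        dsimp only
        rw [hrw]
      rw [e1, e2, ← Real.sqrt_eq_rpow, ← Real.sqrt_eq_rpow] at hcs
      exact hcs
    -- combine
    have hnormc : ‖(1 / (2 * Complex.I) : ℂ)‖ = 1/2 := by
      simp [norm_div, Complex.norm_I]
    rw [norm_mul, hnormc, mul_pow]
    have hX : ‖∫ β in Ioc (-1:ℝ) 1,
        (f α - f β) * (Real.cot (Real.pi / 2 * (α - β)) : ℂ) * g β‖ ^ 2 ≤
        (Real.sqrt (K α) * Real.sqrt G) ^ 2 :=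
      pow_le_pow_left₀ (norm_nonneg _) (step1.trans step2) 2
    calc (1/2:ℝ)^2 * ‖∫ β in Ioc (-1:ℝ) 1,
        (f α - f β) * (Real.cot (Real.pi / 2 * (α - β)) : ℂ) * g β‖ ^ 2 ≤
        (1/2:ℝ)^2 * (Real.sqrt (K α) * Real.sqrt G) ^ 2 := by
          exact mul_le_mul_of_nonneg_left hX (by norm_num)
      _ = ((1/4) * G) * K α := by
          rw [mul_pow, Real.sq_sqrt (hKnn α), Real.sq_sqrt hGnn]; ring
  -- integrate the pointwise bound
  have hmain : (∫ α in Ioc (-1:ℝ) 1,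
      ‖(1 / (2 * Complex.I)) * ∫ β in Ioc (-1:ℝ) 1,
          (f α - f β) * (Real.cot (Real.pi / 2 * (α - β)) : ℂ) * g β‖ ^ 2) ≤
      ((1/4) * G) * ∫ α in Ioc (-1:ℝ) 1, K α := by
    rw [← integral_const_mul]
    exact integral_mono_of_nonneg (Eventually.of_forall fun α => sq_nonneg _)
      (hKint.const_mul _) key
  set D : ℝ := ∫ α in Ioc (-1:ℝ) 1, K α with hD
  have hDnn : 0 ≤ D := integral_nonneg fun α => hKnn α
  -- conclude via sqrt monotonicity
  have hgoal1 : Real.sqrt (∫ α in Ioc (-1:ℝ) 1,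
      ‖(1 / (2 * Complex.I)) * ∫ β in Ioc (-1:ℝ) 1,
          (f α - f β) * (Real.cot (Real.pi / 2 * (α - β)) : ℂ) * g β‖ ^ 2) ≤
      Real.sqrt (((1/4) * G) * D) := Real.sqrt_le_sqrt hmain
  refine hgoal1.trans ?_
  have e3 : Real.sqrt (((1/4) * G) * D) = (1/2) * Real.sqrt G * Real.sqrt D := by
    rw [Real.sqrt_mul (by positivity), Real.sqrt_mul (by norm_num) G,
      show Real.sqrt (1/4) = 1/2 by
        rw [show (1/4:ℝ) = (1/2)^2 by norm_num, Real.sqrt_sq (by norm_num)]]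
  rw [e3, one_mul, Real.sqrt_mul (by positivity : (0:ℝ) ≤ Real.pi / 8) D]
  have h12 : (1/2:ℝ) ≤ Real.sqrt (Real.pi / 8) := by
    rw [show (1/2:ℝ) = Real.sqrt (1/4) by
      rw [show (1/4:ℝ) = (1/2)^2 by norm_num, Real.sqrt_sq (by norm_num)]]
    exact Real.sqrt_le_sqrt (by nlinarith [Real.pi_gt_three])
  have hsG : 0 ≤ Real.sqrt G := Real.sqrt_nonneg _
  have hsD : 0 ≤ Real.sqrt D := Real.sqrt_nonneg _
  nlinarith [mul_le_mul_of_nonneg_right h12 (mul_nonneg hsG hsD)]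
end
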